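/- arXiv:math/9903206 — 10 statements merged into one kernel-verified Lean document; each statement's English description precedes it below -/
import Mathlib

section
/- For the Laplacian L of a connected graph on n vertices, the quotient group ℤ^n / Im(L) is isomorphic to the product of ℤ with a finite abelian group. -/
/-- Laplacian of a multigraph given by edge multiplicities on unordered pairs. -/
def lap {V : Type} [Fintype V] [DecidableEq V] (cE : Sym2 V → ℕ) : Matrix V V ℤ :=
  fun x y => if x = y then (∑ k : V, (cE s(x, k) : ℤ)) else -(cE s(x, y) : ℤ)

/-- Underlying simple graph of a multigraph. -/
def mgraph {V : Type} (cE : Sym2 V → ℕ) : SimpleGraph V where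
  Adj a b := a ≠ b ∧ 0 < cE s(a, b)
  symm := ⟨fun a b h => ⟨h.1.symm, by rw [Sym2.eq_swap]; exact h.2⟩⟩
  loopless := ⟨fun a h => h.1 rfl⟩


def sumL (R : Type) [CommRing R] (n : ℕ) : (Fin n → R) →ₗ[R] R where
  toFun v := ∑ i, v i
  map_add' a b := by simp [Finset.sum_add_distrib]
  map_smul' c v := by simp [Finset.mul_sum]

lemma lap_eq {n : ℕ} (cE : Sym2 (Fin n) → ℕ) (hloop : ∀ x : Fin n, cE s(x, x) = 0)
    (x y : Fin n) :
    lap cE x y = (if x = y then (∑ k, (cE s(x, k) : ℤ)) else 0) - (cE s(x, y) : ℤ) := by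
  unfold lap
  split
  · next h => subst h; simp [hloop]
  · ring

lemma lap_colsum {n : ℕ} (cE : Sym2 (Fin n) → ℕ) (hloop : ∀ x : Fin n, cE s(x, x) = 0)
    (y : Fin n) : ∑ x, lap cE x y = 0 := by
  simp only [lap_eq cE hloop]
  rw [Finset.sum_sub_distrib, Finset.sum_ite_eq' Finset.univ y]
  have : ∀ x : Fin n, (cE s(x, y) : ℤ) = (cE s(y, x) : ℤ) := by
    intro x; rw [Sym2.eq_swap]
  simp [this]


lemma sum_mulVec {R : Type} [CommRing R] {n : ℕ} (M : Matrix (Fin n) (Fin n) R)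
    (hcol : ∀ y, ∑ x, M x y = 0) (v : Fin n → R) : ∑ x, (M.mulVec v) x = 0 := by
  simp only [Matrix.mulVec, dotProduct]
  rw [Finset.sum_comm]
  have : ∀ y : Fin n, ∑ x, M x y * v y = 0 := by
    intro y; rw [← Finset.sum_mul, hcol, zero_mul]
  simp [this]

lemma lapQ_mulVec {n : ℕ} (cE : Sym2 (Fin n) → ℕ) (hloop : ∀ x : Fin n, cE s(x, x) = 0)
    (x : Fin n → ℚ) (i : Fin n) :
    (((lap cE).map (Int.cast : ℤ → ℚ)).mulVec x) i
      = ∑ j, (cE s(i, j) : ℚ) * (x i - x j) := by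
  simp only [Matrix.mulVec, dotProduct, Matrix.map_apply, lap_eq cE hloop]
  push_cast
  simp only [sub_mul, Finset.sum_sub_distrib, mul_sub]
  congr 1
  · simp [ite_mul, Finset.sum_ite_eq, Finset.sum_mul, Finset.mul_sum, mul_comm]

lemma lapQ_ker_const {n : ℕ} (cE : Sym2 (Fin n) → ℕ) (hloop : ∀ x : Fin n, cE s(x, x) = 0)
    (hconn : (mgraph cE).Connected) {x : Fin n → ℚ}
    (hx : ((lap cE).map (Int.cast : ℤ → ℚ)).mulVec x = 0) (i j : Fin n) : x i = x j := by
  set c : Fin n → Fin n → ℚ := fun a b => (cE s(a, b) : ℚ) with hc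
  have hcsym : ∀ a b, c a b = c b a := fun a b => by
    simp only [hc]; rw [Sym2.eq_swap]
  have hS : ∑ a, ∑ b, c a b * (x a * (x a - x b)) = 0 := by
    have h1 : ∑ a, x a * ((((lap cE).map (Int.cast : ℤ → ℚ)).mulVec x) a) = 0 := by
      rw [hx]; simp
    rw [← h1]
    apply Finset.sum_congr rfl; intro a _
    rw [lapQ_mulVec cE hloop, Finset.mul_sum]
    apply Finset.sum_congr rfl; intro b _
    ring
  have hBA : ∑ a, ∑ b, c a b * (x b * (x a - x b))
      = - ∑ a, ∑ b, c a b * (x a * (x a - x b)) := by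
    rw [Finset.sum_comm]
    calc ∑ b, ∑ a, c a b * (x b * (x a - x b))
        = ∑ b, ∑ a, -(c b a * (x b * (x b - x a))) := by
          apply Finset.sum_congr rfl; intro b _
          apply Finset.sum_congr rfl; intro a _
          rw [hcsym a b]; ring
      _ = - ∑ a, ∑ b, c a b * (x a * (x a - x b)) := by
          simp
  have hsq : ∑ a, ∑ b, c a b * (x a - x b) ^ 2 = 0 := by
    have hr : ∀ a b : Fin n, c a b * (x a - x b) ^ 2
        = c a b * (x a * (x a - x b)) - c a b * (x b * (x a - x b)) := by
      intro a b; ring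
    simp only [hr, Finset.sum_sub_distrib]
    rw [hS, hBA, hS]; ring
  have hnn : ∀ a b : Fin n, 0 ≤ c a b * (x a - x b) ^ 2 := fun a b =>
    mul_nonneg (by simp [hc]) (sq_nonneg _)
  have h3 : ∀ a b : Fin n, c a b * (x a - x b) ^ 2 = 0 := by
    intro a b
    have h4 := (Finset.sum_eq_zero_iff_of_nonneg
      (fun a _ => Finset.sum_nonneg fun b _ => hnn a b)).mp hsq a (Finset.mem_univ a)
    exact (Finset.sum_eq_zero_iff_of_nonneg (fun b _ => hnn a b)).mp h4 b (Finset.mem_univ b)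
  have hadj : ∀ a b : Fin n, (mgraph cE).Adj a b → x a = x b := by
    intro a b hab
    have hc0 : c a b ≠ 0 := by
      simp only [hc]
      exact_mod_cast Nat.pos_iff_ne_zero.mp hab.2
    have h5 := (mul_eq_zero.mp (h3 a b)).resolve_left hc0
    have h6 := pow_eq_zero_iff (n := 2) (by norm_num) |>.mp h5
    linarith [sub_eq_zero.mp h6]
  have key : ∀ {a b : Fin n}, (mgraph cE).Walk a b → x a = x b := by
    intro a b w
    induction w with
    | nil => rfl
    | cons h p ih => exact (hadj _ _ h).trans ih
  obtain ⟨w⟩ := hconn.preconnected i j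
  exact key w

lemma rangeQ_eq {n : ℕ} (cE : Sym2 (Fin n) → ℕ) (hloop : ∀ x : Fin n, cE s(x, x) = 0)
    (hconn : (mgraph cE).Connected) (hn : 0 < n) :
    LinearMap.range (Matrix.mulVecLin ((lap cE).map (Int.cast : ℤ → ℚ)))
      = LinearMap.ker (sumL ℚ n) := by
  set fq := Matrix.mulVecLin ((lap cE).map (Int.cast : ℤ → ℚ))
  have hcol : ∀ y, ∑ x, ((lap cE).map (Int.cast : ℤ → ℚ)) x y = 0 := by
    intro y
    have := lap_colsum cE hloop y
    have : ((∑ x, lap cE x y : ℤ) : ℚ) = 0 := by rw [this]; simp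
    simpa [Matrix.map_apply] using this
  have hle : LinearMap.range fq ≤ LinearMap.ker (sumL ℚ n) := by
    rintro _ ⟨v, rfl⟩
    exact sum_mulVec _ hcol v
  -- the all-ones vector
  have hone : (fun _ => (1 : ℚ) : Fin n → ℚ) ≠ 0 := by
    intro h
    have := congrFun h ⟨0, hn⟩
    simp at this
  have hker : LinearMap.ker fq ≤ Submodule.span ℚ {(fun _ => (1 : ℚ) : Fin n → ℚ)} := by
    intro x hx
    have hx' : ((lap cE).map (Int.cast : ℤ → ℚ)).mulVec x = 0 := hx
    have hconst := lapQ_ker_const cE hloop hconn hx'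
    rw [Submodule.mem_span_singleton]
    exact ⟨x ⟨0, hn⟩, by funext i; simp [hconst ⟨0, hn⟩ i]⟩
  have hkf : Module.finrank ℚ (LinearMap.ker fq) ≤ 1 := by
    calc Module.finrank ℚ (LinearMap.ker fq)
        ≤ Module.finrank ℚ (Submodule.span ℚ {(fun _ => (1 : ℚ) : Fin n → ℚ)}) :=
          Submodule.finrank_mono hker
      _ = 1 := finrank_span_singleton hone
  have hsurj : Function.Surjective (sumL ℚ n) := by
    intro q
    refine ⟨Pi.single ⟨0, hn⟩ q, ?_⟩
    simp [sumL, Finset.sum_pi_single']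
  have h1 := LinearMap.finrank_range_add_finrank_ker fq
  have h2 := LinearMap.finrank_range_add_finrank_ker (sumL ℚ n)
  rw [Module.finrank_pi] at h1 h2
  have h3 : Module.finrank ℚ (LinearMap.range (sumL ℚ n)) = 1 := by
    rw [LinearMap.range_eq_top.mpr hsurj, finrank_top, Module.finrank_self]
  have h4 : Module.finrank ℚ (LinearMap.range fq)
      ≤ Module.finrank ℚ (LinearMap.ker (sumL ℚ n)) := Submodule.finrank_mono hle
  exact Submodule.eq_of_le_of_finrank_le hle (by omega)

lemma torsion_wit {n : ℕ} (cE : Sym2 (Fin n) → ℕ) (hloop : ∀ x : Fin n, cE s(x, x) = 0)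
    (hconn : (mgraph cE).Connected) (hn : 0 < n) (v : Fin n → ℤ) (hv : ∑ i, v i = 0) :
    ∃ m : ℤ, m ≠ 0 ∧ ∃ w : Fin n → ℤ, (lap cE).mulVec w = m • v := by
  set vq : Fin n → ℚ := fun i => (v i : ℚ) with hvq
  have hvmem : vq ∈ LinearMap.ker (sumL ℚ n) := by
    show ∑ i, vq i = 0
    simp only [hvq]
    exact_mod_cast congrArg (Int.cast : ℤ → ℚ) hv
  rw [← rangeQ_eq cE hloop hconn hn] at hvmem
  obtain ⟨u, hu⟩ := hvmem
  obtain ⟨b, hb⟩ := IsLocalization.exist_integer_multiples_of_finite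
    (nonZeroDivisors ℤ) (S := ℚ) u
  choose w hw using hb
  refine ⟨(b : ℤ), nonZeroDivisors.coe_ne_zero b, w, ?_⟩
  have hcast : ∀ i, ((w i : ℤ) : ℚ) = (b : ℤ) • u i := fun i => by
    have := hw i
    rwa [algebraMap_int_eq, eq_intCast] at this
  funext i
  apply @Int.cast_injective ℚ _ _
  have hL := RingHom.map_mulVec (Int.castRingHom ℚ) (lap cE) w i
  simp only [Int.coe_castRingHom] at hL
  rw [hL]
  have hcw : (Int.cast : ℤ → ℚ) ∘ w = (b : ℤ) • u := by
    funext j; simpa using hcast j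
  rw [hcw]
  have : ((lap cE).map (Int.cast : ℤ → ℚ)).mulVec ((b : ℤ) • u)
      = (b : ℤ) • ((lap cE).map (Int.cast : ℤ → ℚ)).mulVec u := by
    rw [Matrix.mulVec_smul]
  rw [this]
  have hu' : ((lap cE).map (Int.cast : ℤ → ℚ)).mulVec u = vq := hu
  rw [hu']
  simp [hvq]

/-- for a connected graph, the quotient of `ℤ^n` by the column span of the
Laplacian is isomorphic to the product of `ℤ` with a finite abelian group. -/
theorem quotient_laplacian_iso_int_prod_finite {n : ℕ} (cE : Sym2 (Fin n) → ℕ)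
    (hloop : ∀ x : Fin n, cE s(x, x) = 0)
    (hconn : (mgraph cE).Connected) :
    ∃ (Φ : AddCommGrpCat), Finite Φ ∧
      Nonempty (((Fin n → ℤ) ⧸ LinearMap.range (Matrix.mulVecLin (lap cE))) ≃+ ℤ × Φ) := by
  obtain ⟨i0⟩ := hconn.nonempty
  have hn : 0 < n := i0.pos
  set R := LinearMap.range (Matrix.mulVecLin (lap cE)) with hR
  have h_le : R ≤ LinearMap.ker (sumL ℤ n) := by
    rintro _ ⟨v, rfl⟩
    show sumL ℤ n ((lap cE).mulVec v) = 0
    exact sum_mulVec _ (lap_colsum cE hloop) v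
  set σbar : ((Fin n → ℤ) ⧸ R) →ₗ[ℤ] ℤ := Submodule.liftQ R (sumL ℤ n) h_le with hσ
  have hmk : ∀ v : Fin n → ℤ, σbar (Submodule.Quotient.mk v) = ∑ i, v i := fun v => rfl
  have hsurj : Function.Surjective σbar := by
    intro z
    refine ⟨Submodule.Quotient.mk (Pi.single i0 z), ?_⟩
    rw [hmk]
    simp [Finset.sum_pi_single']
  obtain ⟨s, hs⟩ := σbar.exists_rightInverse_of_surjective (LinearMap.range_eq_top.mpr hsurj)
  have hs' : ∀ z : ℤ, σbar (s z) = z := fun z => LinearMap.ext_iff.mp hs z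
  set K := LinearMap.ker σbar with hK
  -- K is finite
  have hQfin : Module.Finite ℤ ((Fin n → ℤ) ⧸ R) :=
    Module.Finite.of_surjective R.mkQ (Submodule.mkQ_surjective R)
  have hKfg : Module.Finite ℤ K := by
    have : IsNoetherian ℤ ((Fin n → ℤ) ⧸ R) := isNoetherian_of_isNoetherianRing_of_finite ℤ _
    exact Module.Finite.iff_fg.mpr (IsNoetherian.noetherian K)
  have hKtor : Module.IsTorsion ℤ K := by
    rintro ⟨q, hq⟩
    obtain ⟨v, rfl⟩ := Submodule.mkQ_surjective R q
    have hv : ∑ i, v i = 0 := by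
      have := hq
      rw [LinearMap.mem_ker] at this
      rw [← hmk v]
      exact this
    obtain ⟨m, hm, w, hw⟩ := torsion_wit cE hloop hconn hn v hv
    refine ⟨⟨m, mem_nonZeroDivisors_of_ne_zero hm⟩, ?_⟩
    apply Subtype.ext
    show m • (R.mkQ v) = 0
    rw [← map_smul, ← hw]
    exact (Submodule.Quotient.mk_eq_zero R).mpr ⟨w, rfl⟩
  have hKfin : Finite K := Module.finite_of_fg_torsion K hKtor
  refine ⟨AddCommGrpCat.of (ULift ↥K), Finite.of_equiv _ Equiv.ulift.symm, ⟨?_⟩⟩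
  refine AddEquiv.trans ?_ ((AddEquiv.refl ℤ).prodCongr AddEquiv.ulift.symm)
  exact
  { toFun := fun q => (σbar q, ⟨q - s (σbar q), by
      rw [LinearMap.mem_ker, map_sub, hs', sub_self]⟩)
    invFun := fun p => s p.1 + p.2.1
    left_inv := fun q => by
      show s (σbar q) + (q - s (σbar q)) = q
      abel
    right_inv := fun p => by
      refine Prod.ext ?_ (Subtype.ext ?_)
      · simp only [map_add, hs']
        have : σbar (p.2 : (Fin n → ℤ) ⧸ R) = 0 := p.2.2
        rw [this, add_zero]
      · simp only
        have : σbar (p.2 : (Fin n → ℤ) ⧸ R) = 0 := p.2.2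
        rw [map_add, hs', this, add_zero, add_sub_cancel_left]
    map_add' := fun a b => by
      refine Prod.ext ?_ (Subtype.ext ?_)
      · simp
      · show (a + b) - s (σbar (a + b)) = (a - s (σbar a)) + (b - s (σbar b))
        rw [map_add, map_add]; abel }
end

section
/- Let L be the Laplacian of a connected graph G on n vertices, and suppose S = (s_1,…,s_n) ∈ ℤ^n satisfies L·S = h·(e_j − e_i) for some h > 0 and i ≠ j, with S not a multiple of (1,…,1). Then s_i = min{s_ℓ : 1 ≤ ℓ ≤ n} and s_j = max{s_ℓ : 1 ≤ ℓ ≤ n}. -/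
lemma lap_mulVec {n : ℕ} (cE : Sym2 (Fin n) → ℕ) (hloop : ∀ x : Fin n, cE s(x, x) = 0)
    (S : Fin n → ℤ) (x : Fin n) :
    (lap cE).mulVec S x = ∑ k, (cE s(x, k) : ℤ) * (S x - S k) := by
  have hx0 : (cE s(x, x) : ℤ) = 0 := by rw [hloop]; simp
  simp only [lap, Matrix.mulVec, dotProduct]
  rw [← Finset.add_sum_erase _ _ (Finset.mem_univ x),
      ← Finset.add_sum_erase _ (fun k => (cE s(x, k) : ℤ) * (S x - S k)) (Finset.mem_univ x)]
  rw [if_pos rfl, hx0, zero_mul, zero_add]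
  have h1 : ∑ y ∈ Finset.univ.erase x,
      (if x = y then (∑ k : Fin n, (cE s(x, k) : ℤ)) else -(cE s(x, y) : ℤ)) * S y
      = ∑ y ∈ Finset.univ.erase x, -(cE s(x, y) : ℤ) * S y := by
    apply Finset.sum_congr rfl
    intro y hy
    rw [if_neg (Ne.symm (Finset.ne_of_mem_erase hy))]
  rw [h1]
  rw [← Finset.add_sum_erase _ (fun k => (cE s(x, k) : ℤ)) (Finset.mem_univ x), hx0, zero_add,
      Finset.sum_mul, ← Finset.sum_add_distrib]
  apply Finset.sum_congr rfl
  intro y _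
  ring

lemma walk_prop {V : Type} (G : SimpleGraph V) (S : V → ℤ) (M : ℤ) :
    ∀ (x j : V), G.Walk x j →
    (∀ z, z ≠ j → S z = M → ∀ y, G.Adj z y → S y = M) →
    S x = M → S j = M := by
  intro x j w
  induction w with
  | nil => exact fun _ hx => hx
  | @cons u v b ha p ih =>
    intro prop hx
    by_cases hub : u = b
    · rw [← hub]; exact hx
    · exact ih prop (prop u hub hx v ha)

lemma max_at {n : ℕ} (cE : Sym2 (Fin n) → ℕ)
    (hloop : ∀ x : Fin n, cE s(x, x) = 0)
    (hconn : (mgraph cE).Connected)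
    (S : Fin n → ℤ) (h : ℤ) (hh : 0 < h) (i j : Fin n) (hij : i ≠ j)
    (hS : (lap cE).mulVec S = h • (Pi.single j 1 - Pi.single i 1)) :
    ∀ ℓ : Fin n, S ℓ ≤ S j := by
  obtain ⟨m, -, hm⟩ := Finset.exists_max_image Finset.univ S ⟨i, Finset.mem_univ i⟩
  have hmax : ∀ k, S k ≤ S m := fun k => hm k (Finset.mem_univ k)
  have prop : ∀ x : Fin n, x ≠ j → S x = S m →
      ∀ y, (mgraph cE).Adj x y → S y = S m := by
    intro x hxj hx y hy
    have hLx := congrFun hS x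
    rw [lap_mulVec cE hloop S x] at hLx
    simp only [Pi.smul_apply, Pi.sub_apply, Pi.single_apply, smul_eq_mul] at hLx
    rw [if_neg hxj] at hLx
    have hnn : ∀ k ∈ Finset.univ, (0:ℤ) ≤ (cE s(x, k) : ℤ) * (S x - S k) := by
      intro k _
      apply mul_nonneg (by positivity)
      rw [hx]
      exact sub_nonneg.mpr (hmax k)
    have hsum := Finset.sum_nonneg hnn
    by_cases hxi : x = i
    · exfalso
      rw [if_pos hxi] at hLx
      rw [hLx] at hsum
      nlinarith
    · rw [if_neg hxi] at hLx
      simp only [sub_zero, mul_zero] at hLx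
      have hterm := (Finset.sum_eq_zero_iff_of_nonneg hnn).mp hLx y (Finset.mem_univ y)
      have hpos : (0:ℤ) < (cE s(x, y) : ℤ) := by exact_mod_cast hy.2
      rcases mul_eq_zero.mp hterm with h1 | h2
      · omega
      · have : S x = S y := by linarith [sub_eq_zero.mp h2]
        rw [← this, hx]
  obtain ⟨w⟩ := hconn.preconnected m j
  have hj : S j = S m := walk_prop (mgraph cE) S (S m) m j w prop rfl
  intro ℓ
  rw [hj]
  exact hmax ℓ

/-- if `L·S = h·(e_j − e_i)` with `h > 0`, `i ≠ j`, and `S` not a multiple of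
the all-ones vector, then `s_i` is the minimum and `s_j` the maximum of the weights. -/
theorem marking_min_max {n : ℕ} (cE : Sym2 (Fin n) → ℕ)
    (hloop : ∀ x : Fin n, cE s(x, x) = 0)
    (hconn : (mgraph cE).Connected)
    (S : Fin n → ℤ) (h : ℤ) (hh : 0 < h) (i j : Fin n) (hij : i ≠ j)
    (hS : (lap cE).mulVec S = h • (Pi.single j 1 - Pi.single i 1))
    (hnc : ¬ ∃ k : ℤ, S = fun _ => k) :
    (∀ ℓ : Fin n, S i ≤ S ℓ) ∧ (∀ ℓ : Fin n, S ℓ ≤ S j) := by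
  refine ⟨?_, max_at cE hloop hconn S h hh i j hij hS⟩
  have hS' : (lap cE).mulVec (-S) = h • (Pi.single i 1 - Pi.single j 1) := by
    rw [Matrix.mulVec_neg, hS]
    ext x
    simp [Pi.single_apply]
    ring
  intro ℓ
  have := max_at cE hloop hconn (-S) h hh j i hij.symm hS' ℓ
  simpa using this
end

section
/- Let G be a connected graph with a marking in which adjacent vertices v, v' joined by e edges have weights s > s' = 0. Let G' be the thickening: remove the e edges and insert new vertices w_1,…,w_{s−1} with es edges between consecutive vertices of the chain v', w_1, …, w_{s−1}, v. Then the number of spanning trees satisfies κ(G') = s·(es)^{s−1}·κ(G). -/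
open Classical in
/-- The number of spanning trees of a multigraph with edge multiplicities `cE`. -/
noncomputable def kappa {V : Type} [Fintype V] [DecidableEq V] (cE : Sym2 V → ℕ) : ℕ :=
  ∑ T ∈ Finset.univ.filter
      (fun T : Finset (Sym2 V) =>
        (∀ e ∈ T, ¬ e.IsDiag) ∧
          (SimpleGraph.fromEdgeSet (↑T : Set (Sym2 V))).IsTree),
    ∏ e ∈ T, cE e

/-- The chain of vertices `v' = chain 0, w_1, …, w_{s-1}, v = chain s` used in the
thickening construction. -/
def chain {n : ℕ} (s : ℕ) (v v' : Fin n) (k : Fin (s + 1)) : Fin n ⊕ Fin (s - 1) :=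
  if h0 : (k : ℕ) = 0 then Sum.inl v'
  else if hs : (k : ℕ) = s then Sum.inl v
  else Sum.inr ⟨(k : ℕ) - 1, by have := k.isLt; omega⟩


open SimpleGraph Finset

section AuxGraph
variable {α β : Type*}

lemma reach_of_reach {G : SimpleGraph α} {H : SimpleGraph β} (f : α → β)
    (hf : ∀ a b, G.Adj a b → H.Reachable (f a) (f b)) {x y : α} (h : G.Reachable x y) :
    H.Reachable (f x) (f y) := by
  obtain ⟨p⟩ := h
  induction p with
  | nil => exact Reachable.refl _
  | cons h p ih => exact (hf _ _ h).trans ih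

lemma isAcyclic_of_hom {G : SimpleGraph α} {H : SimpleGraph β} (f : α → β)
    (hinj : Function.Injective f) (hf : ∀ a b, G.Adj a b → H.Adj (f a) (f b))
    (hH : H.IsAcyclic) : G.IsAcyclic := by
  intro u c hc
  exact hH ((c.map ⟨f, fun h => hf _ _ h⟩))
    ((Walk.map_isCycle_iff_of_injective (f := (⟨f, fun h => hf _ _ h⟩ : G →g H)) hinj).2 hc)

lemma connected_sdiff_of_reach {G : SimpleGraph α} {a b : α}
    (hG : G.Connected)
    (hab : (G \ SimpleGraph.fromEdgeSet {s(a, b)}).Reachable a b) :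
    (G \ SimpleGraph.fromEdgeSet {s(a, b)}).Connected := by
  haveI : Nonempty α := hG.nonempty
  refine SimpleGraph.Connected.mk fun x y => ?_
  have := reach_of_reach (G := G) (H := G \ SimpleGraph.fromEdgeSet {s(a, b)}) id
      (fun c d hcd => by
        by_cases hce : s(c, d) = s(a, b)
        · rcases Sym2.eq_iff.1 hce with ⟨rfl, rfl⟩ | ⟨rfl, rfl⟩
          · exact hab
          · exact hab.symm
        · refine SimpleGraph.Adj.reachable ?_
          simp only [sdiff_adj, fromEdgeSet_adj, Set.mem_singleton_iff]
          exact ⟨hcd, fun hh => hce hh.1⟩)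
      (hG.preconnected x y)
  simpa using this

lemma card_le_ncard_add_one {V : Type} [Fintype V] :
    ∀ (N : ℕ) (G : SimpleGraph V), G.edgeSet.ncard = N → G.Connected →
      Fintype.card V ≤ N + 1 := by
  intro N
  induction N using Nat.strong_induction_on with
  | _ N ih =>
    intro G hN hG
    classical
    by_cases hac : G.IsAcyclic
    · have ht : G.IsTree := ⟨hG, hac⟩
      letI : Fintype G.edgeSet := Set.Finite.fintype (Set.toFinite _)
      have hcard := ht.card_edgeFinset
      rw [← hcard, SimpleGraph.edgeFinset, ← Set.ncard_eq_toFinset_card', hN]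
    · simp only [SimpleGraph.IsAcyclic] at hac
      push_neg at hac
      obtain ⟨u, c, hc⟩ := hac
      obtain ⟨x, y, hxy⟩ : ∃ x y, s(x, y) ∈ c.edges := by
        cases c with
        | nil => exact absurd hc (by simp [Walk.IsCycle])
        | cons h q => exact ⟨_, _, by simp only [Walk.edges_cons, List.mem_cons]; left; rfl⟩
      have hmem : s(x, y) ∈ G.edgeSet := c.edges_subset_edgeSet hxy
      have hreach : G.Adj x y ∧ (G \ SimpleGraph.fromEdgeSet {s(x, y)}).Reachable x y :=
        (adj_and_reachable_delete_edges_iff_exists_cycle).2 ⟨u, c, hc, hxy⟩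
      set G' := G \ SimpleGraph.fromEdgeSet {s(x, y)} with hG'
      have hG'conn : G'.Connected := connected_sdiff_of_reach hG hreach.2
      have hG'edge : G'.edgeSet = G.edgeSet \ {s(x, y)} := by
        rw [hG', edgeSet_sdiff, edgeSet_fromEdgeSet, edgeSet_sdiff_sdiff_isDiag]
      have hNpos : 0 < N := by
        rw [← hN]
        exact Set.ncard_pos (Set.toFinite _) |>.2 ⟨_, hmem⟩
      have hncard : G'.edgeSet.ncard = N - 1 := by
        rw [hG'edge, Set.ncard_diff_singleton_of_mem hmem, hN]
      have := ih (N - 1) (by omega) G' hncard hG'conn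
      omega

lemma isTree_of_connected_card {V : Type} [Fintype V] {G : SimpleGraph V}
    (hG : G.Connected) (hcard : G.edgeSet.ncard + 1 ≤ Fintype.card V) : G.IsTree := by
  refine ⟨hG, ?_⟩
  by_contra hac
  simp only [SimpleGraph.IsAcyclic] at hac
  push_neg at hac
  obtain ⟨u, c, hc⟩ := hac
  obtain ⟨x, y, hxy⟩ : ∃ x y, s(x, y) ∈ c.edges := by
    cases c with
    | nil => exact absurd hc (by simp [Walk.IsCycle])
    | cons h q => exact ⟨_, _, by simp only [Walk.edges_cons, List.mem_cons]; left; rfl⟩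
  have hmem : s(x, y) ∈ G.edgeSet := c.edges_subset_edgeSet hxy
  have hreach : G.Adj x y ∧ (G \ SimpleGraph.fromEdgeSet {s(x, y)}).Reachable x y :=
    (adj_and_reachable_delete_edges_iff_exists_cycle).2 ⟨u, c, hc, hxy⟩
  set G' := G \ SimpleGraph.fromEdgeSet {s(x, y)} with hG'
  have hG'conn : G'.Connected := connected_sdiff_of_reach hG hreach.2
  have hG'edge : G'.edgeSet = G.edgeSet \ {s(x, y)} := by
    rw [hG', edgeSet_sdiff, edgeSet_fromEdgeSet, edgeSet_sdiff_sdiff_isDiag]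
  have hNpos : 0 < G.edgeSet.ncard :=
    Set.ncard_pos (Set.toFinite _) |>.2 ⟨_, hmem⟩
  have hncard : G'.edgeSet.ncard = G.edgeSet.ncard - 1 := by
    rw [hG'edge, Set.ncard_diff_singleton_of_mem hmem]
  have := card_le_ncard_add_one _ G' hncard hG'conn
  omega

lemma ncard_edgeSet_fromEdgeSet {X : Type} (T : Finset (Sym2 X))
    (h : ∀ e ∈ T, ¬e.IsDiag) :
    (SimpleGraph.fromEdgeSet (↑T : Set (Sym2 X))).edgeSet.ncard = T.card := by
  rw [edgeSet_fromEdgeSet]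
  rw [show (↑T : Set (Sym2 X)) \ Sym2.diagSet = ↑T by
    ext z; simp only [Set.mem_diff, Sym2.mem_diagSet, Finset.mem_coe]
    exact ⟨fun hz => hz.1, fun hz => ⟨hz, h z hz⟩⟩]
  exact Set.ncard_coe_finset T

lemma isTree_ncard_eq {V : Type} [Fintype V] {G : SimpleGraph V} (h : G.IsTree) :
    G.edgeSet.ncard + 1 = Fintype.card V := by
  classical
  letI : Fintype G.edgeSet := Set.Finite.fintype (Set.toFinite _)
  rw [Set.ncard_eq_toFinset_card']
  exact h.card_edgeFinset

end AuxGraph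


open SimpleGraph Finset

section ChainLemmas
variable {n s : ℕ} {v v' : Fin n}

lemma chain_injective (hvv' : v ≠ v') : Function.Injective (chain s v v') := by
  intro k l hkl
  unfold chain at hkl
  split_ifs at hkl <;>
    first
      | (exact Fin.ext (by omega))
      | (exact absurd (Sum.inl.inj hkl) hvv')
      | (exact absurd (Sum.inl.inj hkl).symm hvv')
      | (exact absurd (Sum.inl.inj hkl) (Ne.symm hvv'))
      | (exact absurd (Sum.inl.inj hkl).symm (Ne.symm hvv'))
      | (exact (Sum.inl_ne_inr hkl).elim)
      | (exact (Sum.inr_ne_inl hkl).elim)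
      | (exact Fin.ext (by
          have := Sum.inr.inj hkl
          have := congrArg Fin.val this
          simp only at this
          omega))

lemma chain_eq_inl_iff (hs : 1 ≤ s) {j : Fin (s+1)} {x : Fin n} :
    chain s v v' j = Sum.inl x ↔ (((j : ℕ) = 0 ∧ x = v') ∨ ((j : ℕ) = s ∧ x = v)) := by
  unfold chain
  split_ifs with h1 h2
  · constructor
    · intro hh; exact Or.inl ⟨h1, (Sum.inl.inj hh).symm⟩
    · rintro (⟨_, rfl⟩ | ⟨hc, rfl⟩)
      · rfl
      · omega
  · constructor
    · intro hh; exact Or.inr ⟨h2, (Sum.inl.inj hh).symm⟩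
    · rintro (⟨hc, rfl⟩ | ⟨_, rfl⟩)
      · omega
      · rfl
  · constructor
    · intro hh; exact absurd hh (by simp)
    · rintro (⟨hc, rfl⟩ | ⟨hc, rfl⟩) <;> omega

lemma chain_zero : chain s v v' 0 = Sum.inl v' := by simp [chain]

lemma chain_last (hs : 1 ≤ s) : chain s v v' (Fin.last s) = Sum.inl v := by
  unfold chain
  rw [dif_neg (show ¬((Fin.last s : ℕ) = 0) from by exact (by omega : ¬(s = 0))),
    dif_pos (show ((Fin.last s : ℕ) = s) from rfl)]

lemma chain_val_inr (hs : 1 ≤ s) {j : Fin (s+1)} (h0 : (j : ℕ) ≠ 0) (hsj : (j : ℕ) ≠ s) :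
    chain s v v' j = Sum.inr ⟨(j : ℕ) - 1, by have := j.isLt; omega⟩ := by
  unfold chain
  rw [dif_neg h0, dif_neg hsj]

lemma chain_inr (hs : 1 ≤ s) (t : Fin (s-1)) :
    chain s v v' ⟨(t : ℕ) + 1, by have := t.isLt; omega⟩ = Sum.inr t := by
  have ht := t.isLt
  rw [chain_val_inr hs (by exact (by omega : ¬((t : ℕ) + 1 = 0)))
    (by exact (by omega : ¬((t : ℕ) + 1 = s)))]
  exact congrArg Sum.inr (Fin.ext (by exact (by omega : (t : ℕ) + 1 - 1 = (t : ℕ))))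

lemma cf_injective (hvv' : v ≠ v') :
    Function.Injective
      (fun k : Fin s => s(chain s v v' k.castSucc, chain s v v' k.succ)) := by
  intro k l h
  simp only [Sym2.eq_iff] at h
  rcases h with ⟨h1, _⟩ | ⟨h1, h2⟩
  · have := chain_injective hvv' h1
    exact Fin.ext (by have := congrArg Fin.val this; simpa using this)
  · have e1 := congrArg Fin.val (chain_injective hvv' h1)
    have e2 := congrArg Fin.val (chain_injective hvv' h2)
    simp only [Fin.coe_castSucc, Fin.val_succ] at e1 e2
    omega

lemma cf_not_diag (hvv' : v ≠ v') (k : Fin s) :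
    ¬ (s(chain s v v' k.castSucc, chain s v v' k.succ)).IsDiag := by
  rw [Sym2.mk_isDiag_iff]
  intro h
  have := congrArg Fin.val (chain_injective hvv' h)
  simp only [Fin.coe_castSucc, Fin.val_succ] at this
  omega

lemma iota_ne_cf (hvv' : v ≠ v') (hs : 1 ≤ s) {e0 : Sym2 (Fin n)} (he0 : e0 ≠ s(v, v')) (k : Fin s) :
    Sym2.map Sum.inl e0 ≠ s(chain s v v' k.castSucc, chain s v v' k.succ) := by
  induction e0 using Sym2.ind with
  | _ a b =>
    rw [Sym2.map_pair_eq]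
    intro heq
    have hks : (k.castSucc : ℕ) = (k : ℕ) := rfl
    have hss : (k.succ : ℕ) = (k : ℕ) + 1 := rfl
    have hklt := k.isLt
    rcases Sym2.eq_iff.1 heq with ⟨h1, h2⟩ | ⟨h1, h2⟩
    · rcases (chain_eq_inl_iff hs).1 h1.symm with ⟨hc, rfl⟩ | ⟨hc, rfl⟩
      · rcases (chain_eq_inl_iff hs).1 h2.symm with ⟨hc2, rfl⟩ | ⟨hc2, rfl⟩
        · omega
        · exact he0 (by rw [Sym2.eq_swap])
      · omega
    · rcases (chain_eq_inl_iff hs).1 h1.symm with ⟨hc, rfl⟩ | ⟨hc, rfl⟩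
      · omega
      · rcases (chain_eq_inl_iff hs).1 h2.symm with ⟨hc2, rfl⟩ | ⟨hc2, rfl⟩
        · exact he0 rfl
        · omega

end ChainLemmas

open Classical in
lemma kappa_eq_pos {V : Type} [Fintype V] [DecidableEq V] (cE : Sym2 V → ℕ) :
    kappa cE = ∑ T ∈ Finset.univ.filter
      (fun T : Finset (Sym2 V) =>
        ((∀ e ∈ T, ¬ e.IsDiag) ∧
          (SimpleGraph.fromEdgeSet (↑T : Set (Sym2 V))).IsTree) ∧ ∀ e ∈ T, cE e ≠ 0),
      ∏ e ∈ T, cE e := by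
  rw [kappa]
  refine (Finset.sum_subset ?_ ?_).symm
  · intro T hT
    simp only [Finset.mem_filter] at *
    exact ⟨Finset.mem_univ T, hT.2.1.1, hT.2.1.2⟩
  · intro T hT hT2
    simp only [Finset.mem_filter] at hT hT2
    have : ∃ e0 ∈ T, cE e0 = 0 := by
      by_contra hcon
      push_neg at hcon
      exact hT2 ⟨Finset.mem_univ T, ⟨hT.2.1, hT.2.2⟩, hcon⟩
    obtain ⟨e0, he0, hz⟩ := this
    exact Finset.prod_eq_zero he0 hz


open SimpleGraph Finset

section Main
variable {n s : ℕ} {v v' : Fin n}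

/-- The `k`-th chain edge. -/
def cfe (s : ℕ) (v v' : Fin n) (k : Fin s) : Sym2 (Fin n ⊕ Fin (s-1)) :=
  s(chain s v v' k.castSucc, chain s v v' k.succ)

/-- The forward map on spanning trees. -/
def PsiSet (s : ℕ) (v v' : Fin n) (T : Finset (Sym2 (Fin n))) (K : Finset (Fin s)) :
    Finset (Sym2 (Fin n ⊕ Fin (s-1))) :=
  (T.erase s(v, v')).image (Sym2.map Sum.inl) ∪ K.image (cfe s v v')

open Classical in
/-- The backward map on spanning trees. -/
noncomputable def ThetaMap {n : ℕ} {s : ℕ} (hs : 1 ≤ s) (v v' : Fin n)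
    (T' : Finset (Sym2 (Fin n ⊕ Fin (s - 1)))) : Finset (Sym2 (Fin n)) × Fin s :=
  let B := (T'.preimage (Sym2.map Sum.inl)
      ((Sym2.map.injective Sum.inl_injective).injOn)).erase s(v, v')
  let K := Finset.univ.filter
      (fun k : Fin s => cfe s v v' k ∈ T')
  if K = Finset.univ then (insert s(v, v') B, ⟨0, hs⟩)
  else (B, if hne : (Finset.univ \ K).Nonempty then hne.choose else ⟨0, hs⟩)

lemma chain_mk_zero {h : 0 < s+1} : chain s v v' ⟨0, h⟩ = Sum.inl v' := dif_pos rfl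

lemma chain_mk_last (hs : 1 ≤ s) {h : s < s+1} : chain s v v' ⟨s, h⟩ = Sum.inl v := by
  unfold chain
  rw [dif_neg (show ¬(((⟨s, h⟩ : Fin (s+1)) : ℕ) = 0) from by exact (by omega : ¬(s = 0))),
    dif_pos (show (((⟨s, h⟩ : Fin (s+1)) : ℕ) = s) from rfl)]

lemma iota_diag_iff {e0 : Sym2 (Fin n)} :
    (Sym2.map (Sum.inl : Fin n → Fin n ⊕ Fin (s-1)) e0).IsDiag ↔ e0.IsDiag := by
  induction e0 using Sym2.ind with
  | _ a b =>
    rw [Sym2.map_pair_eq, Sym2.mk_isDiag_iff, Sym2.mk_isDiag_iff]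
    simp

lemma cfe_ne_endpoints (hvv' : v ≠ v') (k : Fin s) :
    chain s v v' k.castSucc ≠ chain s v v' k.succ := by
  intro hcon
  have := congrArg Fin.val (chain_injective hvv' hcon)
  simp only [Fin.coe_castSucc, Fin.val_succ] at this
  omega

lemma cfe_injective (hvv' : v ≠ v') : Function.Injective (cfe s v v') :=
  cf_injective hvv'

lemma cfe_not_diag (hvv' : v ≠ v') (k : Fin s) : ¬ (cfe s v v' k).IsDiag :=
  cf_not_diag hvv' k

lemma psi_disj (hvv' : v ≠ v') (hs : 1 ≤ s) (T : Finset (Sym2 (Fin n))) (K : Finset (Fin s)) :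
    Disjoint ((T.erase s(v, v')).image (Sym2.map Sum.inl)) (K.image (cfe s v v')) := by
  rw [Finset.disjoint_left]
  rintro x hx hx2
  obtain ⟨e0, he0, rfl⟩ := Finset.mem_image.1 hx
  obtain ⟨k, _, heq⟩ := Finset.mem_image.1 hx2
  exact iota_ne_cf hvv' hs (Finset.ne_of_mem_erase he0) k heq.symm

lemma psi_card (hvv' : v ≠ v') (hs : 1 ≤ s) (T : Finset (Sym2 (Fin n))) (K : Finset (Fin s)) :
    (PsiSet s v v' T K).card = (T.erase s(v, v')).card + K.card := by
  rw [PsiSet, Finset.card_union_of_disjoint (psi_disj hvv' hs T K),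
    Finset.card_image_of_injective _ (Sym2.map.injective Sum.inl_injective),
    Finset.card_image_of_injective _ (cfe_injective hvv')]

lemma psi_mem_iota_iff (hvv' : v ≠ v') (hs : 1 ≤ s) {T : Finset (Sym2 (Fin n))}
    {K : Finset (Fin s)} {e0 : Sym2 (Fin n)} (he0 : e0 ≠ s(v, v')) :
    Sym2.map Sum.inl e0 ∈ PsiSet s v v' T K ↔ e0 ∈ T.erase s(v, v') := by
  constructor
  · intro hmem
    rcases Finset.mem_union.1 hmem with hmem | hmem
    · obtain ⟨a, ha, heq⟩ := Finset.mem_image.1 hmem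
      rwa [← Sym2.map.injective Sum.inl_injective heq]
    · obtain ⟨k, _, heq⟩ := Finset.mem_image.1 hmem
      exact absurd heq.symm (iota_ne_cf hvv' hs he0 k)
  · intro hmem
    exact Finset.mem_union_left _ (Finset.mem_image_of_mem _ hmem)

lemma psi_mem_cfe_iff (hvv' : v ≠ v') (hs : 1 ≤ s) {T : Finset (Sym2 (Fin n))}
    {K : Finset (Fin s)} {k : Fin s} :
    cfe s v v' k ∈ PsiSet s v v' T K ↔ k ∈ K := by
  constructor
  · intro hmem
    rcases Finset.mem_union.1 hmem with hmem | hmem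
    · obtain ⟨a, ha, heq⟩ := Finset.mem_image.1 hmem
      exact absurd heq (iota_ne_cf hvv' hs (Finset.ne_of_mem_erase ha) k)
    · obtain ⟨l, hl, heq⟩ := Finset.mem_image.1 hmem
      rwa [← cfe_injective hvv' heq]
  · intro hmem
    exact Finset.mem_union_right _ (Finset.mem_image_of_mem _ hmem)

lemma psi_nondiag (hvv' : v ≠ v') {T : Finset (Sym2 (Fin n))} {K : Finset (Fin s)}
    (hT1 : ∀ e0 ∈ T, ¬ e0.IsDiag) :
    ∀ x ∈ PsiSet s v v' T K, ¬ x.IsDiag := by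
  intro x hx
  rcases Finset.mem_union.1 hx with hx | hx
  · obtain ⟨e0, he0, rfl⟩ := Finset.mem_image.1 hx
    rw [iota_diag_iff]
    exact hT1 e0 (Finset.mem_of_mem_erase he0)
  · obtain ⟨k, _, rfl⟩ := Finset.mem_image.1 hx
    exact cfe_not_diag hvv' k

lemma psi_pos {cE : Sym2 (Fin n) → ℕ} {cE' : Sym2 (Fin n ⊕ Fin (s-1)) → ℕ} {e : ℕ}
    (hepos : 0 < e) (hs : 1 ≤ s)
    (hkeep : ∀ e0 : Sym2 (Fin n), e0 ≠ s(v, v') → cE' (Sym2.map Sum.inl e0) = cE e0)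
    (hchain : ∀ k : Fin s, cE' (cfe s v v' k) = e * s)
    {T : Finset (Sym2 (Fin n))} {K : Finset (Fin s)}
    (hT3 : ∀ e0 ∈ T, cE e0 ≠ 0) :
    ∀ x ∈ PsiSet s v v' T K, cE' x ≠ 0 := by
  intro x hx
  rcases Finset.mem_union.1 hx with hx | hx
  · obtain ⟨e0, he0, rfl⟩ := Finset.mem_image.1 hx
    rw [hkeep e0 (Finset.ne_of_mem_erase he0)]
    exact hT3 e0 (Finset.mem_of_mem_erase he0)
  · obtain ⟨k, _, rfl⟩ := Finset.mem_image.1 hx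
    rw [hchain k]
    positivity

lemma psi_prod (hvv' : v ≠ v') (hs : 1 ≤ s)
    {cE : Sym2 (Fin n) → ℕ} {cE' : Sym2 (Fin n ⊕ Fin (s-1)) → ℕ} {e : ℕ}
    (hkeep : ∀ e0 : Sym2 (Fin n), e0 ≠ s(v, v') → cE' (Sym2.map Sum.inl e0) = cE e0)
    (hchain : ∀ k : Fin s, cE' (cfe s v v' k) = e * s)
    (T : Finset (Sym2 (Fin n))) (K : Finset (Fin s)) :
    ∏ x ∈ PsiSet s v v' T K, cE' x = (∏ e0 ∈ T.erase s(v, v'), cE e0) * (e * s) ^ K.card := by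
  rw [PsiSet, Finset.prod_union (psi_disj hvv' hs T K),
    Finset.prod_image (fun a _ b _ h => Sym2.map.injective Sum.inl_injective h),
    Finset.prod_image (fun a _ b _ h => cfe_injective hvv' h)]
  congr 1
  · exact Finset.prod_congr rfl (fun e0 he0 => hkeep e0 (Finset.ne_of_mem_erase he0))
  · rw [Finset.prod_congr rfl (fun k _ => hchain k), Finset.prod_const]

end Main


open SimpleGraph Finset

section Main4
variable {n s : ℕ} {v v' : Fin n}

lemma sym2_exists_rep {α : Type*} (z : Sym2 α) : ∃ a b, z = s(a, b) :=
  z.ind (fun a b => ⟨a, b, rfl⟩)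

lemma two_le_n (hvv' : v ≠ v') : 2 ≤ n := by
  by_contra hcon
  push_neg at hcon
  have h1 := v.isLt
  have h2 := v'.isLt
  exact hvv' (Fin.ext (by omega))

lemma psi_tree (hvv' : v ≠ v') (hs : 1 ≤ s)
    (T : Finset (Sym2 (Fin n))) (m : Fin s)
    (hT1 : ∀ e0 ∈ T, ¬ e0.IsDiag)
    (hT2 : (SimpleGraph.fromEdgeSet (↑T : Set (Sym2 (Fin n)))).IsTree) :
    (SimpleGraph.fromEdgeSet
      (↑(PsiSet s v v' T (if s(v,v') ∈ T then Finset.univ else Finset.univ.erase m)) :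
        Set (Sym2 (Fin n ⊕ Fin (s-1))))).IsTree := by
  classical
  set K := (if s(v,v') ∈ T then (Finset.univ : Finset (Fin s)) else Finset.univ.erase m) with hK
  set P := PsiSet s v v' T K with hP
  set G' := SimpleGraph.fromEdgeSet (↑P : Set (Sym2 (Fin n ⊕ Fin (s-1)))) with hG'
  have hchainadj : ∀ k : Fin s, k ∈ K →
      G'.Adj (chain s v v' k.castSucc) (chain s v v' k.succ) := by
    intro k hk
    rw [hG', SimpleGraph.fromEdgeSet_adj]
    exact ⟨Finset.mem_coe.2 ((psi_mem_cfe_iff hvv' hs).2 hk), cfe_ne_endpoints hvv' k⟩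
  have hup : ∀ (j : ℕ) (hj : j ≤ s), (∀ (i : ℕ) (hi : i < j), (⟨i, by omega⟩ : Fin s) ∈ K) →
      G'.Reachable (Sum.inl v') (chain s v v' ⟨j, by omega⟩) := by
    intro j
    induction j with
    | zero =>
      intro hj _
      rw [chain_mk_zero]
    | succ j ih =>
      intro hj hall
      have hreach := ih (by omega) (fun i hi => hall i (by omega))
      have hadj := hchainadj ⟨j, by omega⟩ (hall j (by omega))
      exact hreach.trans hadj.reachable
  have hdown : ∀ (d : ℕ) (hd : d ≤ s),
      (∀ (i : ℕ), s - d ≤ i → ∀ (hi : i < s), (⟨i, hi⟩ : Fin s) ∈ K) →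
      G'.Reachable (chain s v v' ⟨s, by omega⟩) (chain s v v' ⟨s - d, by omega⟩) := by
    intro d
    induction d with
    | zero => intro _ _; exact Reachable.refl _
    | succ d ih =>
      intro hd hall
      have hreach := ih (by omega) (fun i hi hi2 => hall i (by omega) hi2)
      have hadj := hchainadj ⟨s - d - 1, by omega⟩ (hall (s - d - 1) (by omega) (by omega))
      have hsucc : (⟨s - d - 1, by omega⟩ : Fin s).succ = (⟨s - d, by omega⟩ : Fin (s+1)) :=
        Fin.ext (by exact (by omega : s - d - 1 + 1 = s - d))
      rw [hsucc] at hadj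
      have hcast : (⟨s - d - 1, by omega⟩ : Fin s).castSucc
          = (⟨s - (d+1), by omega⟩ : Fin (s+1)) :=
        Fin.ext (by exact (by omega : s - d - 1 = s - (d+1)))
      rw [hcast] at hadj
      exact hreach.trans hadj.symm.reachable
  have hupv : s(v,v') ∈ T → G'.Reachable (Sum.inl v') (Sum.inl v) := by
    intro hvT
    have hKu : K = Finset.univ := by rw [hK, if_pos hvT]
    have := hup s le_rfl (fun i hi => by rw [hKu]; exact Finset.mem_univ _)
    rwa [chain_mk_last hs] at this
  have hbase : ∀ a b : Fin n, (SimpleGraph.fromEdgeSet (↑T : Set (Sym2 (Fin n)))).Adj a b →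
      G'.Reachable (Sum.inl a) (Sum.inl b) := by
    intro a b hab
    rw [SimpleGraph.fromEdgeSet_adj] at hab
    obtain ⟨hmem, hne⟩ := hab
    by_cases habe : s(a, b) = s(v, v')
    · have hvT : s(v, v') ∈ T := habe ▸ (Finset.mem_coe.1 hmem)
      rcases Sym2.eq_iff.1 habe with ⟨rfl, rfl⟩ | ⟨rfl, rfl⟩
      · exact (hupv hvT).symm
      · exact hupv hvT
    · have hmem' : Sym2.map Sum.inl s(a, b) ∈ P :=
        (psi_mem_iota_iff hvv' hs habe).2 (Finset.mem_erase.2 ⟨habe, Finset.mem_coe.1 hmem⟩)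
      rw [Sym2.map_pair_eq] at hmem'
      refine SimpleGraph.Adj.reachable ?_
      rw [hG', SimpleGraph.fromEdgeSet_adj]
      exact ⟨Finset.mem_coe.2 hmem', fun hcon => hne (Sum.inl.inj hcon)⟩
  have hlift : ∀ a b : Fin n,
      (SimpleGraph.fromEdgeSet (↑T : Set (Sym2 (Fin n)))).Reachable a b →
      G'.Reachable (Sum.inl a) (Sum.inl b) :=
    fun a b h => reach_of_reach Sum.inl hbase h
  have hvert : ∀ z : Fin n ⊕ Fin (s-1), G'.Reachable (Sum.inl v') z := by
    intro z
    match z with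
    | Sum.inl a => exact hlift v' a (hT2.isConnected.preconnected v' a)
    | Sum.inr t =>
      have ht := t.isLt
      have hz : chain s v v' ⟨(t : ℕ) + 1, by omega⟩ = Sum.inr t := chain_inr hs t
      rw [← hz]
      by_cases hvT : s(v, v') ∈ T
      · have hKu : K = Finset.univ := by rw [hK, if_pos hvT]
        exact hup ((t : ℕ) + 1) (by omega) (fun i hi => by rw [hKu]; exact Finset.mem_univ _)
      · have hKe : K = Finset.univ.erase m := by rw [hK, if_neg hvT]
        by_cases hcmp : (t : ℕ) + 1 ≤ (m : ℕ)
        · refine hup ((t : ℕ) + 1) (by omega) (fun i hi => ?_)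
          rw [hKe]
          refine Finset.mem_erase.2 ⟨?_, Finset.mem_univ _⟩
          intro hcon
          have := congrArg Fin.val hcon
          simp only at this
          omega
        · have hd := hdown (s - ((t : ℕ) + 1)) (by omega) (fun i hilow hi => by
            rw [hKe]
            refine Finset.mem_erase.2 ⟨?_, Finset.mem_univ _⟩
            intro hcon
            have := congrArg Fin.val hcon
            simp only at this
            omega)
          have hidx : (⟨s - (s - ((t : ℕ) + 1)), by omega⟩ : Fin (s+1))
              = (⟨(t : ℕ) + 1, by omega⟩ : Fin (s+1)) :=
            Fin.ext (by exact (by omega : s - (s - ((t : ℕ) + 1)) = (t : ℕ) + 1))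
          rw [hidx] at hd
          rw [chain_mk_last hs] at hd
          exact (hlift v' v (hT2.isConnected.preconnected v' v)).trans hd
  haveI : Nonempty (Fin n ⊕ Fin (s-1)) := ⟨Sum.inl v⟩
  have hconn' : G'.Connected :=
    SimpleGraph.Connected.mk (fun x y => (hvert x).symm.trans (hvert y))
  have hTcard : T.card + 1 = n := by
    have h1 := isTree_ncard_eq hT2
    rwa [ncard_edgeSet_fromEdgeSet T hT1, Fintype.card_fin] at h1
  refine isTree_of_connected_card hconn' ?_
  rw [ncard_edgeSet_fromEdgeSet P (psi_nondiag hvv' hT1), hP, psi_card hvv' hs T K]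
  rw [show Fintype.card (Fin n ⊕ Fin (s-1)) = n + (s-1) by
    rw [Fintype.card_sum, Fintype.card_fin, Fintype.card_fin]]
  by_cases hvT : s(v, v') ∈ T
  · have h1 : 1 ≤ T.card := Finset.card_pos.2 ⟨_, hvT⟩
    rw [hK, if_pos hvT, Finset.card_erase_of_mem hvT, Finset.card_univ, Fintype.card_fin]
    omega
  · rw [hK, if_neg hvT, Finset.erase_eq_of_notMem hvT,
      Finset.card_erase_of_mem (Finset.mem_univ m), Finset.card_univ, Fintype.card_fin]
    omega

end Main4


open SimpleGraph Finset

section Main5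
variable {n s : ℕ} {v v' : Fin n}

lemma theta_spec (hvv' : v ≠ v') (hs : 1 ≤ s)
    {cE : Sym2 (Fin n) → ℕ} {cE' : Sym2 (Fin n ⊕ Fin (s-1)) → ℕ} {e : ℕ}
    (he : cE s(v, v') = e) (hepos : 0 < e)
    (hkeep : ∀ e0 : Sym2 (Fin n), e0 ≠ s(v, v') → cE' (Sym2.map Sum.inl e0) = cE e0)
    (hzero : ∀ x y : Fin n ⊕ Fin (s - 1), cE' s(x, y) ≠ 0 →
      (∃ a b : Fin n, x = Sum.inl a ∧ y = Sum.inl b ∧ s(a, b) ≠ s(v, v')) ∨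
        ∃ k : Fin s, s(x, y) = s(chain s v v' k.castSucc, chain s v v' k.succ))
    (T' : Finset (Sym2 (Fin n ⊕ Fin (s-1))))
    (hd : ∀ x ∈ T', ¬ x.IsDiag)
    (ht : (SimpleGraph.fromEdgeSet (↑T' : Set (Sym2 (Fin n ⊕ Fin (s-1))))).IsTree)
    (hp : ∀ x ∈ T', cE' x ≠ 0) :
    (∀ x ∈ (ThetaMap hs v v' T').1, ¬ x.IsDiag) ∧
    (SimpleGraph.fromEdgeSet (↑(ThetaMap hs v v' T').1 : Set (Sym2 (Fin n)))).IsTree ∧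
    (∀ x ∈ (ThetaMap hs v v' T').1, cE x ≠ 0) ∧
    (s(v, v') ∈ (ThetaMap hs v v' T').1 → (ThetaMap hs v v' T').2 = ⟨0, hs⟩) ∧
    PsiSet s v v' (ThetaMap hs v v' T').1
      (if s(v, v') ∈ (ThetaMap hs v v' T').1 then Finset.univ
        else Finset.univ.erase (ThetaMap hs v v' T').2) = T' := by
  classical
  set B := (T'.preimage (Sym2.map Sum.inl)
      ((Sym2.map.injective Sum.inl_injective).injOn)).erase s(v, v') with hB
  set K := Finset.univ.filter (fun k : Fin s => cfe s v v' k ∈ T') with hKdef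
  have hBvv : s(v, v') ∉ B := fun h => (Finset.mem_erase.1 h).1 rfl
  have hBmem : ∀ e0 ∈ B, Sym2.map Sum.inl e0 ∈ T' := fun e0 he0 =>
    Finset.mem_preimage.1 (Finset.mem_of_mem_erase he0)
  have hBne : ∀ e0 ∈ B, e0 ≠ s(v, v') := fun e0 he0 => (Finset.mem_erase.1 he0).1
  have hKmem : ∀ k ∈ K, cfe s v v' k ∈ T' := fun k hk => (Finset.mem_filter.1 hk).2
  -- the structure of T'
  have hsplit : T' = B.image (Sym2.map Sum.inl) ∪ K.image (cfe s v v') := by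
    ext x
    constructor
    · intro hx
      have hx0 : cE' x ≠ 0 := hp x hx
      obtain ⟨x1, x2, rfl⟩ := sym2_exists_rep x
      rcases hzero x1 x2 hx0 with ⟨a, b, rfl, rfl, hne⟩ | ⟨k, hk⟩
      · refine Finset.mem_union_left _ (Finset.mem_image.2 ⟨s(a, b), ?_, ?_⟩)
        · exact Finset.mem_erase.2 ⟨hne, Finset.mem_preimage.2 (by rwa [Sym2.map_pair_eq])⟩
        · rw [Sym2.map_pair_eq]
      · refine Finset.mem_union_right _ (Finset.mem_image.2 ⟨k, ?_, hk.symm⟩)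
        rw [hKdef, Finset.mem_filter]
        exact ⟨Finset.mem_univ _, by rw [cfe, ← hk]; exact hx⟩
    · intro hx
      rcases Finset.mem_union.1 hx with hx | hx
      · obtain ⟨e0, he0, rfl⟩ := Finset.mem_image.1 hx
        exact hBmem e0 he0
      · obtain ⟨k, hk, rfl⟩ := Finset.mem_image.1 hx
        exact hKmem k hk
  have hdisj : Disjoint (B.image (Sym2.map Sum.inl)) (K.image (cfe s v v')) := by
    rw [Finset.disjoint_left]
    rintro x hx hx2
    obtain ⟨e0, he0, rfl⟩ := Finset.mem_image.1 hx
    obtain ⟨k, _, heq⟩ := Finset.mem_image.1 hx2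
    exact iota_ne_cf hvv' hs (hBne e0 he0) k heq.symm
  have hBnd : ∀ e0 ∈ B, ¬ e0.IsDiag := by
    intro e0 he0 hcon
    exact hd _ (hBmem e0 he0) (iota_diag_iff.2 hcon)
  have hBpos : ∀ e0 ∈ B, cE e0 ≠ 0 := by
    intro e0 he0
    rw [← hkeep e0 (hBne e0 he0)]
    exact hp _ (hBmem e0 he0)
  have hcard : T'.card = B.card + K.card := by
    rw [hsplit, Finset.card_union_of_disjoint hdisj,
      Finset.card_image_of_injective _ (Sym2.map.injective Sum.inl_injective),
      Finset.card_image_of_injective _ (cfe_injective hvv')]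
  have h2n : 2 ≤ n := two_le_n hvv'
  have hT'card : T'.card + 1 = n + (s - 1) := by
    have h1 := isTree_ncard_eq ht
    rwa [ncard_edgeSet_fromEdgeSet T' hd, Fintype.card_sum, Fintype.card_fin,
      Fintype.card_fin] at h1
  -- decomposition of adjacency
  have hadjcase : ∀ x y : Fin n ⊕ Fin (s-1),
      (SimpleGraph.fromEdgeSet (↑T' : Set (Sym2 (Fin n ⊕ Fin (s-1))))).Adj x y →
      (∃ a b : Fin n, s(a, b) ∈ B ∧ a ≠ b ∧ x = Sum.inl a ∧ y = Sum.inl b) ∨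
      (∃ k : Fin s, k ∈ K ∧
        ((x = chain s v v' k.castSucc ∧ y = chain s v v' k.succ) ∨
          (x = chain s v v' k.succ ∧ y = chain s v v' k.castSucc))) := by
    intro x y hxy
    rw [SimpleGraph.fromEdgeSet_adj] at hxy
    obtain ⟨hmem, hne⟩ := hxy
    rw [hsplit] at hmem
    rcases Finset.mem_union.1 (Finset.mem_coe.1 hmem) with h | h
    · obtain ⟨e0, he0, heq⟩ := Finset.mem_image.1 h
      obtain ⟨a, b, rfl⟩ := sym2_exists_rep e0
      rw [Sym2.map_pair_eq] at heq
      rcases Sym2.eq_iff.1 heq with ⟨h1, h2⟩ | ⟨h1, h2⟩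
      · exact Or.inl ⟨a, b, he0, fun hab => hne (h1 ▸ h2 ▸ congrArg Sum.inl hab),
          h1.symm, h2.symm⟩
      · exact Or.inl ⟨b, a, (Sym2.eq_swap (a := a)).symm ▸ he0,
          fun hab => hne (h2 ▸ h1 ▸ congrArg Sum.inl hab), h2.symm, h1.symm⟩
    · obtain ⟨k, hk, heq⟩ := Finset.mem_image.1 h
      rw [cfe] at heq
      rcases Sym2.eq_iff.1 heq with ⟨h1, h2⟩ | ⟨h1, h2⟩
      · exact Or.inr ⟨k, hk, Or.inl ⟨h1.symm, h2.symm⟩⟩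
      · exact Or.inr ⟨k, hk, Or.inr ⟨h2.symm, h1.symm⟩⟩
  by_cases hKu : K = Finset.univ
  · -- all chain edges present
    set f : (Fin n ⊕ Fin (s-1)) → Fin n := Sum.elim id (fun _ => v) with hf
    have hfc : ∀ j : Fin (s+1), f (chain s v v' j) = if (j : ℕ) = 0 then v' else v := by
      intro j
      unfold chain
      split_ifs <;> rfl
    have hfchain : ∀ k : Fin s,
        (SimpleGraph.fromEdgeSet (↑(insert s(v,v') B) : Set (Sym2 (Fin n)))).Reachable
          (f (chain s v v' k.castSucc)) (f (chain s v v' k.succ)) := by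
      intro k
      rw [hfc, hfc]
      by_cases hk0 : (k : ℕ) = 0
      · rw [if_pos (show ((k.castSucc : Fin (s+1)) : ℕ) = 0 from hk0),
          if_neg (show ¬(((k.succ : Fin (s+1)) : ℕ) = 0) from by
            exact (by omega : ¬((k : ℕ) + 1 = 0)))]
        refine SimpleGraph.Adj.reachable ?_
        rw [SimpleGraph.fromEdgeSet_adj]
        constructor
        · rw [Sym2.eq_swap]
          exact Finset.mem_coe.2 (Finset.mem_insert_self _ _)
        · exact hvv'.symm
      · rw [if_neg (show ¬(((k.castSucc : Fin (s+1)) : ℕ) = 0) from hk0),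
          if_neg (show ¬(((k.succ : Fin (s+1)) : ℕ) = 0) from by
            exact (by omega : ¬((k : ℕ) + 1 = 0)))]
    have hconnb : (SimpleGraph.fromEdgeSet
        (↑(insert s(v,v') B) : Set (Sym2 (Fin n)))).Connected := by
      haveI : Nonempty (Fin n) := ⟨v⟩
      refine SimpleGraph.Connected.mk (fun a b => ?_)
      have hmap := reach_of_reach (G := SimpleGraph.fromEdgeSet (↑T' : Set _))
        (H := SimpleGraph.fromEdgeSet (↑(insert s(v,v') B) : Set (Sym2 (Fin n)))) f
        (fun x y hxy => by
          rcases hadjcase x y hxy with ⟨a0, b0, hm, hab, rfl, rfl⟩ | ⟨k, hk, hor⟩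
          · refine SimpleGraph.Adj.reachable ?_
            rw [SimpleGraph.fromEdgeSet_adj]
            exact ⟨Finset.mem_coe.2 (Finset.mem_insert_of_mem hm), hab⟩
          · rcases hor with ⟨rfl, rfl⟩ | ⟨rfl, rfl⟩
            · exact hfchain k
            · exact (hfchain k).symm)
        (ht.isConnected.preconnected (Sum.inl a) (Sum.inl b))
      exact hmap
    have hKcard : K.card = s := by rw [hKu, Finset.card_univ, Fintype.card_fin]
    have hndinsert : ∀ x ∈ insert s(v,v') B, ¬ x.IsDiag := by
      intro x hx
      rcases Finset.mem_insert.1 hx with rfl | hx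
      · rw [Sym2.mk_isDiag_iff]
        exact hvv'
      · exact hBnd x hx
    have htreeb : (SimpleGraph.fromEdgeSet
        (↑(insert s(v,v') B) : Set (Sym2 (Fin n)))).IsTree := by
      refine isTree_of_connected_card hconnb ?_
      rw [ncard_edgeSet_fromEdgeSet _ hndinsert, Finset.card_insert_of_notMem hBvv,
        Fintype.card_fin]
      omega
    have hTheta : ThetaMap hs v v' T' = (insert s(v,v') B, ⟨0, hs⟩) := by
      unfold ThetaMap
      rw [← hKdef, ← hB, if_pos hKu]
    rw [hTheta]
    refine ⟨hndinsert, htreeb, ?_, fun _ => rfl, ?_⟩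
    · intro x hx
      rcases Finset.mem_insert.1 hx with rfl | hx
      · rw [he]; omega
      · exact hBpos x hx
    · rw [if_pos (Finset.mem_insert_self _ _), PsiSet, Finset.erase_insert hBvv, ← hKu, ← hsplit]
  · -- one chain edge missing
    obtain ⟨m, hm⟩ : ∃ m : Fin s, m ∉ K := by
      by_contra hcon
      push_neg at hcon
      exact hKu (Finset.eq_univ_iff_forall.2 hcon)
    set f : (Fin n ⊕ Fin (s-1)) → Fin n :=
      Sum.elim id (fun t => if (t : ℕ) + 1 ≤ (m : ℕ) then v' else v) with hf
    have hfc : ∀ j : Fin (s+1), f (chain s v v' j)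
        = if (j : ℕ) ≤ (m : ℕ) then v' else v := by
      intro j
      have hmlt := m.isLt
      have hjlt := j.isLt
      by_cases h1 : (j : ℕ) = 0
      · rw [show chain s v v' j = Sum.inl v' from by unfold chain; rw [dif_pos h1]]
        rw [if_pos (show (j : ℕ) ≤ (m : ℕ) by omega)]
        rfl
      · by_cases h2 : (j : ℕ) = s
        · rw [show chain s v v' j = Sum.inl v from by unfold chain; rw [dif_neg h1, dif_pos h2]]
          rw [if_neg (show ¬((j : ℕ) ≤ (m : ℕ)) by omega)]
          rfl
        · rw [chain_val_inr hs h1 h2]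
          simp only [hf, Sum.elim_inr, Fin.val_mk]
          split_ifs with h3 h4 <;> first | rfl | omega
    have hfchain : ∀ k : Fin s, k ∈ K →
        f (chain s v v' k.castSucc) = f (chain s v v' k.succ) := by
      intro k hk
      have hkm : (k : ℕ) ≠ (m : ℕ) := fun hcon => hm ((Fin.ext hcon : k = m) ▸ hk)
      rw [hfc, hfc]
      by_cases hlt : (k : ℕ) < (m : ℕ)
      · rw [if_pos (show ((k.castSucc : Fin (s+1)) : ℕ) ≤ (m : ℕ) from by
            exact (by omega : (k : ℕ) ≤ (m : ℕ))),
          if_pos (show ((k.succ : Fin (s+1)) : ℕ) ≤ (m : ℕ) from by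
            exact (by omega : (k : ℕ) + 1 ≤ (m : ℕ)))]
      · rw [if_neg (show ¬(((k.castSucc : Fin (s+1)) : ℕ) ≤ (m : ℕ)) from by
            exact (by omega : ¬((k : ℕ) ≤ (m : ℕ)))),
          if_neg (show ¬(((k.succ : Fin (s+1)) : ℕ) ≤ (m : ℕ)) from by
            exact (by omega : ¬((k : ℕ) + 1 ≤ (m : ℕ))))]
    have hconnb : (SimpleGraph.fromEdgeSet (↑B : Set (Sym2 (Fin n)))).Connected := by
      haveI : Nonempty (Fin n) := ⟨v⟩
      refine SimpleGraph.Connected.mk (fun a b => ?_)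
      have hmap := reach_of_reach (G := SimpleGraph.fromEdgeSet (↑T' : Set _))
        (H := SimpleGraph.fromEdgeSet (↑B : Set (Sym2 (Fin n)))) f
        (fun x y hxy => by
          rcases hadjcase x y hxy with ⟨a0, b0, hmm, hab, rfl, rfl⟩ | ⟨k, hk, hor⟩
          · refine SimpleGraph.Adj.reachable ?_
            rw [SimpleGraph.fromEdgeSet_adj]
            exact ⟨Finset.mem_coe.2 hmm, hab⟩
          · rcases hor with ⟨rfl, rfl⟩ | ⟨rfl, rfl⟩
            · rw [hfchain k hk]
            · rw [hfchain k hk])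
        (ht.isConnected.preconnected (Sum.inl a) (Sum.inl b))
      exact hmap
    have hacyc : (SimpleGraph.fromEdgeSet (↑B : Set (Sym2 (Fin n)))).IsAcyclic := by
      refine isAcyclic_of_hom Sum.inl Sum.inl_injective (fun a b hab => ?_) ht.IsAcyclic
      rw [SimpleGraph.fromEdgeSet_adj] at hab ⊢
      constructor
      · have := hBmem _ (Finset.mem_coe.1 hab.1)
        rwa [Sym2.map_pair_eq] at this
      · exact fun hcon => hab.2 (Sum.inl.inj hcon)
    have htreeb : (SimpleGraph.fromEdgeSet (↑B : Set (Sym2 (Fin n)))).IsTree :=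
      ⟨hconnb, hacyc⟩
    have hBcard : B.card + 1 = n := by
      have h1 := isTree_ncard_eq htreeb
      rwa [ncard_edgeSet_fromEdgeSet B hBnd, Fintype.card_fin] at h1
    have hKcard : K.card + 1 = s := by omega
    have hKm : K = Finset.univ.erase m := by
      refine Finset.eq_of_subset_of_card_le
        (fun k hk => Finset.mem_erase.2 ⟨fun hcon => hm (hcon ▸ hk), Finset.mem_univ _⟩) ?_
      rw [Finset.card_erase_of_mem (Finset.mem_univ m), Finset.card_univ, Fintype.card_fin]
      omega
    have hchoice : ∀ (hne : (Finset.univ \ K).Nonempty), hne.choose = m := by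
      intro hne
      have hsp := hne.choose_spec
      rw [Finset.mem_sdiff] at hsp
      by_contra hc
      exact hsp.2 ((Finset.ext_iff.1 hKm _).2 (Finset.mem_erase.2 ⟨hc, Finset.mem_univ _⟩))
    have hne' : (Finset.univ \ K).Nonempty :=
      ⟨m, Finset.mem_sdiff.2 ⟨Finset.mem_univ m, hm⟩⟩
    have hTheta : ThetaMap hs v v' T' = (B, m) := by
      unfold ThetaMap
      rw [← hKdef, ← hB, if_neg hKu, dif_pos hne', hchoice hne']
    rw [hTheta]
    refine ⟨hBnd, htreeb, hBpos, fun hcon => absurd hcon hBvv, ?_⟩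
    rw [if_neg hBvv, PsiSet, Finset.erase_eq_of_notMem hBvv, ← hKm, ← hsplit]

end Main5


open SimpleGraph Finset

section Main6
variable {n s : ℕ} {v v' : Fin n}

lemma pow_pred (a t : ℕ) (h : 1 ≤ t) : a ^ t = a ^ (t - 1) * a := by
  conv_lhs => rw [show t = t - 1 + 1 by omega]
  rw [pow_succ]

lemma theta_psi (hvv' : v ≠ v') (hs : 1 ≤ s) (T : Finset (Sym2 (Fin n))) (m : Fin s)
    (hm : s(v, v') ∈ T → m = ⟨0, hs⟩) :
    ThetaMap hs v v' (PsiSet s v v' T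
      (if s(v, v') ∈ T then Finset.univ else Finset.univ.erase m)) = (T, m) := by
  classical
  set K0 := (if s(v, v') ∈ T then (Finset.univ : Finset (Fin s))
    else Finset.univ.erase m) with hK0
  set P := PsiSet s v v' T K0 with hP
  have hBeq : (P.preimage (Sym2.map Sum.inl)
      ((Sym2.map.injective Sum.inl_injective).injOn)).erase s(v, v') = T.erase s(v, v') := by
    ext x
    simp only [Finset.mem_erase, Finset.mem_preimage]
    constructor
    · rintro ⟨hxne, hx⟩
      exact ⟨hxne, Finset.mem_of_mem_erase ((psi_mem_iota_iff hvv' hs hxne).1 hx)⟩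
    · rintro ⟨hxne, hx⟩
      exact ⟨hxne, (psi_mem_iota_iff hvv' hs hxne).2 (Finset.mem_erase.2 ⟨hxne, hx⟩)⟩
  have hKeq : Finset.univ.filter (fun k : Fin s => cfe s v v' k ∈ P) = K0 := by
    ext k
    simp only [Finset.mem_filter, Finset.mem_univ, true_and]
    exact psi_mem_cfe_iff hvv' hs
  unfold ThetaMap
  rw [hKeq, hBeq]
  by_cases hvT : s(v, v') ∈ T
  · have hKu : K0 = Finset.univ := by rw [hK0, if_pos hvT]
    rw [if_pos hKu, Finset.insert_erase hvT, hm hvT]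
  · have hKe : K0 = Finset.univ.erase m := by rw [hK0, if_neg hvT]
    have hKne : K0 ≠ Finset.univ := by
      rw [hKe]
      intro hcon
      have hmm : m ∈ Finset.univ.erase m := hcon.symm ▸ Finset.mem_univ m
      exact (Finset.mem_erase.1 hmm).1 rfl
    have hmK : m ∉ K0 := by
      rw [hKe]
      exact fun hcon => (Finset.mem_erase.1 hcon).1 rfl
    have hne' : (Finset.univ \ K0).Nonempty :=
      ⟨m, Finset.mem_sdiff.2 ⟨Finset.mem_univ m, hmK⟩⟩
    have hchoice : ∀ (hne : (Finset.univ \ K0).Nonempty), hne.choose = m := by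
      intro hne
      have hsp := hne.choose_spec
      rw [Finset.mem_sdiff] at hsp
      by_contra hc
      exact hsp.2 ((Finset.ext_iff.1 hKe _).2 (Finset.mem_erase.2 ⟨hc, Finset.mem_univ _⟩))
    rw [if_neg hKne, Finset.erase_eq_of_notMem hvT, dif_pos hne', hchoice hne']

end Main6

/-- thickening the `e` edges between `v` (weight `s`) and `v'` (weight `0`) of a
marked graph `G` into a chain of `s` segments of `e·s` parallel edges multiplies the number of
spanning trees by `s·(es)^{s-1}`. -/
theorem kappa_thickening {n : ℕ} (cE : Sym2 (Fin n) → ℕ)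
    (hloop : ∀ x : Fin n, cE s(x, x) = 0)
    (hconn : (mgraph cE).Connected)
    (v v' : Fin n) (hvv' : v ≠ v') (e : ℕ) (he : cE s(v, v') = e) (hepos : 0 < e)
    -- the marking: `L·S = h(e_j − e_i)`, with weights `S v = s > S v' = 0`
    (i j : Fin n) (hij : i ≠ j) (h : ℕ) (hh : 0 < h) (S : Fin n → ℤ)
    (hS : (lap cE).mulVec S = (h : ℤ) • (Pi.single j 1 - Pi.single i 1))
    (s : ℕ) (hs : 1 ≤ s) (hSv : S v = (s : ℤ)) (hSv' : S v' = 0)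
    -- the thickened graph `G'` on `Fin n ⊕ Fin (s-1)`:
    (cE' : Sym2 (Fin n ⊕ Fin (s - 1)) → ℕ)
    (hkeep : ∀ e0 : Sym2 (Fin n), e0 ≠ s(v, v') → cE' (Sym2.map Sum.inl e0) = cE e0)
    (hchain : ∀ k : Fin s, cE' s(chain s v v' k.castSucc, chain s v v' k.succ) = e * s)
    (hzero : ∀ x y : Fin n ⊕ Fin (s - 1), cE' s(x, y) ≠ 0 →
      (∃ a b : Fin n, x = Sum.inl a ∧ y = Sum.inl b ∧ s(a, b) ≠ s(v, v')) ∨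
        ∃ k : Fin s, s(x, y) = s(chain s v v' k.castSucc, chain s v v' k.succ)) :
    kappa cE' = s * (e * s) ^ (s - 1) * kappa cE := by
  classical
  have hchain' : ∀ k : Fin s, cE' (cfe s v v' k) = e * s := hchain
  rw [kappa_eq_pos cE', kappa_eq_pos cE]
  refine Eq.trans (Finset.sum_nbij'
    (g := fun p : Finset (Sym2 (Fin n)) × Fin s => ∏ e0 ∈ PsiSet s v v' p.1
      (if s(v, v') ∈ p.1 then Finset.univ else Finset.univ.erase p.2), cE' e0)
    (i := fun T => ThetaMap hs v v' T)
    (j := fun p => PsiSet s v v' p.1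
      (if s(v, v') ∈ p.1 then Finset.univ else Finset.univ.erase p.2))
    (t := Finset.univ.filter (fun p : Finset (Sym2 (Fin n)) × Fin s =>
      (((∀ e0 ∈ p.1, ¬ e0.IsDiag) ∧
        (SimpleGraph.fromEdgeSet (↑p.1 : Set (Sym2 (Fin n)))).IsTree)
        ∧ ∀ e0 ∈ p.1, cE e0 ≠ 0) ∧ (s(v, v') ∈ p.1 → p.2 = ⟨0, hs⟩)))
    ?_ ?_ ?_ ?_ ?_) ?_
  · -- hi
    intro T hT
    simp only [Finset.mem_filter, Finset.mem_univ, true_and] at hT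
    obtain ⟨⟨hd, ht⟩, hp⟩ := hT
    obtain ⟨c1, c2, c3, c4, _⟩ := theta_spec hvv' hs he hepos hkeep hzero T hd ht hp
    simp only [Finset.mem_filter, Finset.mem_univ, true_and]
    exact ⟨⟨⟨c1, c2⟩, c3⟩, c4⟩
  · -- hj
    intro p hp
    simp only [Finset.mem_filter, Finset.mem_univ, true_and] at hp
    obtain ⟨⟨⟨hd, ht⟩, hpos⟩, _⟩ := hp
    simp only [Finset.mem_filter, Finset.mem_univ, true_and]
    exact ⟨⟨psi_nondiag hvv' hd, psi_tree hvv' hs p.1 p.2 hd ht⟩,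
      psi_pos hepos hs hkeep hchain' hpos⟩
  · -- left inverse
    intro T hT
    simp only [Finset.mem_filter, Finset.mem_univ, true_and] at hT
    obtain ⟨⟨hd, ht⟩, hp⟩ := hT
    exact (theta_spec hvv' hs he hepos hkeep hzero T hd ht hp).2.2.2.2
  · -- right inverse
    intro p hp
    simp only [Finset.mem_filter, Finset.mem_univ, true_and] at hp
    exact theta_psi hvv' hs p.1 p.2 hp.2
  · -- weights
    intro T hT
    simp only [Finset.mem_filter, Finset.mem_univ, true_and] at hT
    obtain ⟨⟨hd, ht⟩, hp⟩ := hT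
    exact congrArg (fun Z => ∏ e0 ∈ Z, cE' e0)
      (theta_spec hvv' hs he hepos hkeep hzero T hd ht hp).2.2.2.2.symm
  -- now the sum over pairs
  refine Eq.trans (Finset.sum_finset_product' _
    (Finset.univ.filter (fun T : Finset (Sym2 (Fin n)) =>
      ((∀ e0 ∈ T, ¬ e0.IsDiag) ∧
        (SimpleGraph.fromEdgeSet (↑T : Set (Sym2 (Fin n)))).IsTree)
        ∧ ∀ e0 ∈ T, cE e0 ≠ 0))
    (fun T => if s(v, v') ∈ T then ({⟨0, hs⟩} : Finset (Fin s)) else Finset.univ)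
    (f := fun T m => ∏ e0 ∈ PsiSet s v v' T
      (if s(v, v') ∈ T then Finset.univ else Finset.univ.erase m), cE' e0)
    ?_) ?_
  · -- characterization of the product set
    intro p
    simp only [Finset.mem_filter, Finset.mem_univ, true_and]
    constructor
    · rintro ⟨hq, himp⟩
      refine ⟨hq, ?_⟩
      by_cases hvT : s(v, v') ∈ p.1
      · rw [if_pos hvT]
        exact Finset.mem_singleton.2 (himp hvT)
      · rw [if_neg hvT]
        exact Finset.mem_univ _
    · rintro ⟨hq, hmem⟩
      refine ⟨hq, fun hvT => ?_⟩
      rw [if_pos hvT] at hmem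
      exact Finset.mem_singleton.1 hmem
  · -- evaluate the double sum
    rw [Finset.mul_sum]
    refine Finset.sum_congr rfl ?_
    intro T hT
    simp only [Finset.mem_filter, Finset.mem_univ, true_and] at hT
    obtain ⟨⟨hd, ht⟩, hpos⟩ := hT
    by_cases hvT : s(v, v') ∈ T
    · simp only [if_pos hvT]
      rw [Finset.sum_singleton, psi_prod hvv' hs hkeep hchain' T Finset.univ,
        Finset.card_univ, Fintype.card_fin]
      have hmul := Finset.mul_prod_erase T cE hvT
      rw [← hmul, he, pow_pred (e * s) s hs]
      ring
    · simp only [if_neg hvT]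
      rw [Finset.sum_congr rfl (fun m _ => by
        rw [psi_prod hvv' hs hkeep hchain' T (Finset.univ.erase m),
          Finset.card_erase_of_mem (Finset.mem_univ m), Finset.card_univ, Fintype.card_fin,
          Finset.erase_eq_of_notMem hvT])]
      rw [Finset.sum_const, Finset.card_univ, Fintype.card_fin, smul_eq_mul]
      ring
end

section
/- With notation as in the thickening construction (a chain of s segments each consisting of es parallel edges, inserted between v' and v), the group Φ(G') contains (ℤ/esℤ)^{s−2} as a direct summand, for s ≥ 2. -/
def cvert {n : ℕ} (s : ℕ) (v v' : Fin n) (m : ℕ) : Fin n ⊕ Fin (s - 1) :=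
  if h0 : m = 0 then Sum.inl v'
  else if h : m < s then Sum.inr ⟨m - 1, by omega⟩
  else Sum.inl v

lemma chain_eq_cvert {n : ℕ} (s : ℕ) (v v' : Fin n) (j : Fin (s + 1)) :
    chain s v v' j = cvert s v v' j.val := by
  have := j.isLt
  unfold chain cvert
  split_ifs <;> first | rfl | omega


lemma lap_symm {V : Type} [Fintype V] [DecidableEq V] (cE : Sym2 V → ℕ) (x y : V) :
    lap cE x y = lap cE y x := by
  unfold lap
  by_cases h : x = y
  · subst h; rfl
  · rw [if_neg h, if_neg fun e => h e.symm, Sym2.eq_swap]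

lemma cvert_eq_inr {n : ℕ} {s : ℕ} {v v' : Fin n} (m : ℕ) (t : Fin (s - 1)) :
    cvert s v v' m = Sum.inr t ↔ m = t.val + 1 := by
  have ht := t.isLt
  constructor
  · intro h
    unfold cvert at h
    split_ifs at h <;> simp [Fin.ext_iff] at h <;> omega
  · rintro rfl
    unfold cvert
    rw [dif_neg (by omega), dif_pos (by omega)]
    simp

lemma cvert_zero {n : ℕ} {s : ℕ} {v v' : Fin n} : cvert s v v' 0 = Sum.inl v' := by
  simp [cvert]

section Main

variable {n : ℕ} (s : ℕ) (v v' : Fin n)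

-- test lemma: key multiplicity fact
example (e : ℕ) (cE' : Sym2 (Fin n ⊕ Fin (s - 1)) → ℕ)
    (hchain : ∀ k : Fin s, cE' s(chain s v v' k.castSucc, chain s v v' k.succ) = e * s)
    (m : ℕ) (hm : m + 1 ≤ s) :
    cE' s(cvert s v v' m, cvert s v v' (m+1)) = e * s := by
  have h1 := hchain ⟨m, by omega⟩
  rw [chain_eq_cvert, chain_eq_cvert] at h1
  simpa using h1

end Main

lemma key_mult (e : ℕ) (cE' : Sym2 (Fin n ⊕ Fin (s - 1)) → ℕ)
    (hchain : ∀ k : Fin s, cE' s(chain s v v' k.castSucc, chain s v v' k.succ) = e * s)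
    (m : ℕ) (hm : m + 1 ≤ s) :
    cE' s(cvert s v v' m, cvert s v v' (m+1)) = e * s := by
  have h1 := hchain ⟨m, by omega⟩
  rw [chain_eq_cvert, chain_eq_cvert] at h1
  simpa using h1

lemma cE'_char (hs : 2 ≤ s) (e : ℕ) (cE' : Sym2 (Fin n ⊕ Fin (s - 1)) → ℕ)
    (hchain : ∀ k : Fin s, cE' s(chain s v v' k.castSucc, chain s v v' k.succ) = e * s)
    (hzero : ∀ x y : Fin n ⊕ Fin (s - 1), cE' s(x, y) ≠ 0 →
      (∃ a b : Fin n, x = Sum.inl a ∧ y = Sum.inl b ∧ s(a, b) ≠ s(v, v')) ∨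
        ∃ k : Fin s, s(x, y) = s(chain s v v' k.castSucc, chain s v v' k.succ))
    (t : Fin (s - 1)) (y : Fin n ⊕ Fin (s - 1)) :
    cE' s(Sum.inr t, y) =
      if y = cvert s v v' t.val ∨ y = cvert s v v' (t.val + 2) then e * s else 0 := by
  have ht := t.isLt
  have hA : cvert s v v' (t.val + 1) = Sum.inr t := (cvert_eq_inr _ t).mpr rfl
  by_cases h1 : y = cvert s v v' t.val
  · rw [if_pos (Or.inl h1), h1, ← hA, Sym2.eq_swap]
    exact key_mult e cE' hchain t.val (by omega)
  by_cases h2 : y = cvert s v v' (t.val + 2)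
  · rw [if_pos (Or.inr h2), h2, ← hA]
    exact key_mult e cE' hchain (t.val + 1) (by omega)
  rw [if_neg (by tauto)]
  by_contra hne
  rcases hzero _ _ hne with ⟨a, b, hxa, -, -⟩ | ⟨k, hk⟩
  · simp at hxa
  · rw [chain_eq_cvert, chain_eq_cvert] at hk
    simp only [Fin.coe_castSucc, Fin.val_succ] at hk
    rw [Sym2.eq_iff] at hk
    rcases hk with ⟨hk1, hk2⟩ | ⟨hk1, hk2⟩
    · have hkv := (cvert_eq_inr k.val t).mp hk1.symm
      rw [hk2] at h2
      exact h2 (by rw [show k.val + 1 = t.val + 2 by omega])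
    · have hkv := (cvert_eq_inr (k.val + 1) t).mp hk1.symm
      rw [hk2] at h1
      exact h1 (by rw [show k.val = t.val by omega])

lemma cvert_inj {n : ℕ} {s : ℕ} {v v' : Fin n} (hvv' : v ≠ v') {m1 m2 : ℕ}
    (h1 : m1 ≤ s) (h2 : m2 ≤ s) (h : cvert s v v' m1 = cvert s v v' m2) : m1 = m2 := by
  unfold cvert at h
  split_ifs at h <;> simp_all [Fin.ext_iff] <;> omega

lemma row_fact {n : ℕ} {s : ℕ} {v v' : Fin n} (hvv' : v ≠ v') (hs : 2 ≤ s) (e : ℕ)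
    (cE' : Sym2 (Fin n ⊕ Fin (s - 1)) → ℕ)
    (hchain : ∀ k : Fin s, cE' s(chain s v v' k.castSucc, chain s v v' k.succ) = e * s)
    (hzero : ∀ x y : Fin n ⊕ Fin (s - 1), cE' s(x, y) ≠ 0 →
      (∃ a b : Fin n, x = Sum.inl a ∧ y = Sum.inl b ∧ s(a, b) ≠ s(v, v')) ∨
        ∃ k : Fin s, s(x, y) = s(chain s v v' k.castSucc, chain s v v' k.succ))
    (t : Fin (s - 1)) (y : Fin n ⊕ Fin (s - 1)) :
    lap cE' (Sum.inr t) y = ((e * s : ℕ) : ℤ) *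
      ((if y = Sum.inr t then 2 else 0) - (if y = cvert s v v' t.val then 1 else 0) -
        (if y = cvert s v v' (t.val + 2) then 1 else 0)) := by
  have ht := t.isLt
  have hab : cvert s v v' t.val ≠ cvert s v v' (t.val + 2) := fun h => by
    have := cvert_inj hvv' (by omega) (by omega) h; omega
  have hta : (Sum.inr t : Fin n ⊕ Fin (s - 1)) ≠ cvert s v v' t.val := fun h => by
    have := (cvert_eq_inr _ t).mp h.symm; omega
  have htb : (Sum.inr t : Fin n ⊕ Fin (s - 1)) ≠ cvert s v v' (t.val + 2) := fun h => by
    have := (cvert_eq_inr _ t).mp h.symm; omega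
  unfold lap
  by_cases hy : Sum.inr t = y
  · subst hy
    rw [if_pos rfl, if_pos rfl, if_neg hta, if_neg htb]
    have step : ∀ k : Fin n ⊕ Fin (s - 1), (cE' s(Sum.inr t, k) : ℤ) =
        (if k = cvert s v v' t.val then ((e * s : ℕ) : ℤ) else 0) +
        (if k = cvert s v v' (t.val + 2) then ((e * s : ℕ) : ℤ) else 0) := by
      intro k
      rw [cE'_char hs e cE' hchain hzero t k]
      by_cases k1 : k = cvert s v v' t.val
      · by_cases k2 : k = cvert s v v' (t.val + 2)
        · exact absurd (k1.symm.trans k2) hab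
        · simp [k1, k2, hab, Ne.symm hab]
      · by_cases k2 : k = cvert s v v' (t.val + 2)
        · simp [k1, k2, hab, Ne.symm hab]
        · simp [k1, k2, hab, Ne.symm hab]
    rw [Finset.sum_congr rfl fun k _ => step k, Finset.sum_add_distrib,
      Finset.sum_ite_eq', Finset.sum_ite_eq']
    simp
    ring
  · rw [if_neg hy, if_neg fun h => hy h.symm]
    rw [cE'_char hs e cE' hchain hzero t y]
    by_cases k1 : y = cvert s v v' t.val
    · by_cases k2 : y = cvert s v v' (t.val + 2)
      · exact absurd (k1.symm.trans k2) hab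
      · simp [k1, k2, hab, Ne.symm hab]
    · by_cases k2 : y = cvert s v v' (t.val + 2)
      · simp [k1, k2, hab, Ne.symm hab]
      · simp [k1, k2, hab, Ne.symm hab]

lemma mulVec_xw {n : ℕ} {s : ℕ} {v v' : Fin n} (hvv' : v ≠ v') (hs : 2 ≤ s) (e : ℕ)
    (cE' : Sym2 (Fin n ⊕ Fin (s - 1)) → ℕ)
    (hchain : ∀ k : Fin s, cE' s(chain s v v' k.castSucc, chain s v v' k.succ) = e * s)
    (hzero : ∀ x y : Fin n ⊕ Fin (s - 1), cE' s(x, y) ≠ 0 →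
      (∃ a b : Fin n, x = Sum.inl a ∧ y = Sum.inl b ∧ s(a, b) ≠ s(v, v')) ∨
        ∃ k : Fin s, s(x, y) = s(chain s v v' k.castSucc, chain s v v' k.succ))
    (κ : Fin (s - 2)) :
    Matrix.mulVecLin (lap cE')
        (Sum.elim (fun _ : Fin n => (0 : ℤ))
          (fun t : Fin (s - 1) => if t.val ≤ κ.val then -1 else 0)) =
      ((e * s : ℕ) : ℤ) • (Sum.elim (fun x : Fin n => if x = v' then (1 : ℤ) else 0)
        (fun t : Fin (s - 1) => (if t.val = κ.val + 1 then (1 : ℤ) else 0) -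
          (if t.val = κ.val then 1 else 0) - (if t.val = 0 then 1 else 0))) := by
  have hκ : κ.val + 3 ≤ s := by have := κ.isLt; omega
  funext u
  set a : ℕ → ℤ := fun m => if u = cvert s v v' m then 1 else 0 with ha
  have e1 : cvert s v v' 1 = Sum.inr (⟨0, by omega⟩ : Fin (s - 1)) :=
    (cvert_eq_inr _ _).mpr (by simp)
  have e2 : cvert s v v' (κ.val + 1) = Sum.inr (⟨κ.val, by omega⟩ : Fin (s - 1)) :=
    (cvert_eq_inr _ _).mpr (by simp)
  have e3 : cvert s v v' (κ.val + 2) = Sum.inr (⟨κ.val + 1, by omega⟩ : Fin (s - 1)) :=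
    (cvert_eq_inr _ _).mpr (by simp)
  have expand : Matrix.mulVecLin (lap cE')
      (Sum.elim (fun _ : Fin n => (0 : ℤ))
        (fun t : Fin (s - 1) => if t.val ≤ κ.val then -1 else 0)) u =
      ∑ t : Fin (s - 1), lap cE' (Sum.inr t) u * (if t.val ≤ κ.val then -1 else 0) := by
    rw [Matrix.mulVecLin_apply]
    show ∑ y, lap cE' u y * _ = _
    rw [Fintype.sum_sum_type]
    simp only [Sum.elim_inl, Sum.elim_inr, mul_zero, Finset.sum_const_zero, zero_add]
    exact Finset.sum_congr rfl fun t _ => by rw [lap_symm]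
  rw [expand]
  have hrow2 : ∀ t : Fin (s - 1), lap cE' (Sum.inr t) u =
      ((e * s : ℕ) : ℤ) * (2 * a (t.val + 1) - a t.val - a (t.val + 2)) := by
    intro t
    rw [row_fact hvv' hs e cE' hchain hzero t u]
    simp only [ha]
    rw [(cvert_eq_inr (t.val + 1) t).mpr rfl]
    split_ifs <;> ring
  simp only [hrow2]
  have : (∑ t : Fin (s - 1), ((e * s : ℕ) : ℤ) * (2 * a (t.val + 1) - a t.val - a (t.val + 2)) *
      (if t.val ≤ κ.val then -1 else 0)) =
      ∑ m ∈ Finset.range (s - 1), ((e * s : ℕ) : ℤ) *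
        (2 * a (m + 1) - a m - a (m + 2)) * (if m ≤ κ.val then -1 else 0) :=
    Fin.sum_univ_eq_sum_range (fun m => ((e * s : ℕ) : ℤ) * (2 * a (m + 1) - a m - a (m + 2)) * (if m ≤ κ.val then -1 else 0)) (s - 1)
  rw [this]
  rw [← Finset.sum_subset (Finset.range_subset_range.mpr (show κ.val + 1 ≤ s - 1 by omega))
    (fun m _ hnm => by
      have hm' : ¬ m ≤ κ.val := by simp only [Finset.mem_range] at hnm; omega
      rw [if_neg hm', mul_zero])]
  have hsplit : (∑ m ∈ Finset.range (κ.val + 1), ((e * s : ℕ) : ℤ) *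
      (2 * a (m + 1) - a m - a (m + 2)) * (if m ≤ κ.val then -1 else 0)) =
      ∑ m ∈ Finset.range (κ.val + 1),
        (((e * s : ℕ) : ℤ) * (a m - a (m + 1)) -
          ((e * s : ℕ) : ℤ) * (a (m + 1) - a (m + 1 + 1))) :=
    Finset.sum_congr rfl (fun m hm => by
      simp only [Finset.mem_range] at hm
      rw [if_pos (by omega : m ≤ κ.val)]
      ring)
  rw [hsplit, Finset.sum_range_sub' (fun i => ((e * s : ℕ) : ℤ) * (a i - a (i + 1))) (κ.val + 1)]
  rw [Pi.smul_apply, smul_eq_mul]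
  have hg : Sum.elim (fun x : Fin n => if x = v' then (1 : ℤ) else 0)
      (fun t : Fin (s - 1) => (if t.val = κ.val + 1 then (1 : ℤ) else 0) -
        (if t.val = κ.val then 1 else 0) - (if t.val = 0 then 1 else 0)) u =
      a 0 - a 1 - a (κ.val + 1) + a (κ.val + 2) := by
    rcases u with x | t
    · simp [ha, cvert_zero, e1, e2, e3]
    · simp [ha, cvert_zero, e1, e2, e3, Fin.ext_iff]
      ring
  rw [hg]
  ring

def psi (n s N : ℕ) : ((Fin n ⊕ Fin (s - 1)) → ℤ) →ₗ[ℤ] (Fin (s - 2) → ZMod N) where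
  toFun x := fun κ => ∑ t : Fin (s - 1),
    if κ.val + 1 ≤ t.val then ((x (Sum.inr t) : ℤ) : ZMod N) else 0
  map_add' x y := by
    funext κ
    rw [Pi.add_apply, ← Finset.sum_add_distrib]
    exact Finset.sum_congr rfl fun t _ => by
      rw [Pi.add_apply, Int.cast_add]
      split <;> simp
  map_smul' c x := by
    funext κ
    simp only [RingHom.id_apply, Pi.smul_apply, smul_eq_mul]
    rw [Finset.smul_sum]
    exact Finset.sum_congr rfl fun t _ => by
      split
      · rw [zsmul_eq_mul]
        push_cast
        ring
      · rw [smul_zero]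

lemma psi_beta {n s : ℕ} (N : ℕ) (v' : Fin n) (κ : Fin (s - 2)) :
    psi n s N (Sum.elim (fun x : Fin n => if x = v' then (1 : ℤ) else 0)
      (fun t : Fin (s - 1) => (if t.val = κ.val + 1 then (1 : ℤ) else 0) -
        (if t.val = κ.val then 1 else 0) - (if t.val = 0 then 1 else 0))) = Pi.single κ 1 := by
  have hκ : κ.val + 2 ≤ s - 1 := by have := κ.isLt; omega
  funext κ'
  show (∑ t : Fin (s - 1), if κ'.val + 1 ≤ t.val then
      ((Sum.elim (fun x : Fin n => if x = v' then (1 : ℤ) else 0)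
        (fun t : Fin (s - 1) => (if t.val = κ.val + 1 then (1 : ℤ) else 0) -
          (if t.val = κ.val then 1 else 0) - (if t.val = 0 then 1 else 0)) (Sum.inr t) : ℤ)
        : ZMod N) else 0) = _
  simp only [Sum.elim_inr]
  have hsummand : ∀ t : Fin (s - 1),
      (if κ'.val + 1 ≤ t.val then
        (((if t.val = κ.val + 1 then (1 : ℤ) else 0) - (if t.val = κ.val then 1 else 0) -
          (if t.val = 0 then 1 else 0) : ℤ) : ZMod N) else 0) =
      (if t = (⟨κ.val + 1, by omega⟩ : Fin (s - 1)) then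
          (if κ'.val ≤ κ.val then (1 : ZMod N) else 0) else 0) +
      (if t = (⟨κ.val, by omega⟩ : Fin (s - 1)) then
          (if κ'.val + 1 ≤ κ.val then (-1 : ZMod N) else 0) else 0) := by
    intro t
    simp only [Fin.ext_iff, Fin.val_mk]
    split_ifs <;> try (exfalso; omega)
    all_goals (push_cast; ring)
  rw [Finset.sum_congr rfl fun t _ => hsummand t, Finset.sum_add_distrib,
    Finset.sum_ite_eq', Finset.sum_ite_eq']
  simp only [Finset.mem_univ, if_pos]
  rw [Pi.single_apply]
  simp only [Fin.ext_iff, Fin.val_mk]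
  split_ifs <;> try (exfalso; omega)
  all_goals (push_cast; try ring)


lemma exists_summand {T Q : Type} [AddCommGroup T] [AddCommGroup Q]
    (σ : Q →+ T) (π : T →+ Q) (hπσ : ∀ q, π (σ q) = q) :
    ∃ A : AddCommGrpCat, Nonempty (T ≃+ Q × A) := by
  have eqv : T ≃+ Q × ↥π.ker := {
      toFun := fun t => (π t, ⟨t - σ (π t), by simp [AddMonoidHom.mem_ker, map_sub, hπσ]⟩)
      invFun := fun p => σ p.1 + p.2.1
      left_inv := by intro t; simp
      right_inv := by
        rintro ⟨q, a, ha⟩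
        have ha' : π a = 0 := ha
        refine Prod.ext ?_ (Subtype.ext ?_)
        · simp [map_add, hπσ, ha']
        · simp [map_add, hπσ, ha']
      map_add' := by
        intro t1 t2
        refine Prod.ext ?_ (Subtype.ext ?_)
        · simp [map_add]
        · simp [map_add]; abel }
  exact ⟨AddCommGrpCat.of (ULift ↥π.ker),
    ⟨eqv.trans ((AddEquiv.refl Q).prodCongr AddEquiv.ulift.symm)⟩⟩

/-- for the thickening `G'` of a marked graph (chain of `s` segments of `e·s`
parallel edges between `v'` of weight `0` and `v` of weight `s`, `s ≥ 2`), the torsion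
subgroup `Φ(G')` of `ℤ^{n'}/Im(L(G'))` contains `(ℤ/esℤ)^{s-2}` as a direct summand. -/
theorem thickening_torsion_summand {n : ℕ} (cE : Sym2 (Fin n) → ℕ)
    (hloop : ∀ x : Fin n, cE s(x, x) = 0)
    (hconn : (mgraph cE).Connected)
    (v v' : Fin n) (hvv' : v ≠ v') (e : ℕ) (he : cE s(v, v') = e) (hepos : 0 < e)
    (i j : Fin n) (hij : i ≠ j) (h : ℕ) (hh : 0 < h) (S : Fin n → ℤ)
    (hS : (lap cE).mulVec S = (h : ℤ) • (Pi.single j 1 - Pi.single i 1))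
    (s : ℕ) (hs : 2 ≤ s) (hSv : S v = (s : ℤ)) (hSv' : S v' = 0)
    (cE' : Sym2 (Fin n ⊕ Fin (s - 1)) → ℕ)
    (hkeep : ∀ e0 : Sym2 (Fin n), e0 ≠ s(v, v') → cE' (Sym2.map Sum.inl e0) = cE e0)
    (hchain : ∀ k : Fin s, cE' s(chain s v v' k.castSucc, chain s v v' k.succ) = e * s)
    (hzero : ∀ x y : Fin n ⊕ Fin (s - 1), cE' s(x, y) ≠ 0 →
      (∃ a b : Fin n, x = Sum.inl a ∧ y = Sum.inl b ∧ s(a, b) ≠ s(v, v')) ∨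
        ∃ k : Fin s, s(x, y) = s(chain s v v' k.castSucc, chain s v v' k.succ)) :
    ∃ (A : AddCommGrpCat),
      Nonempty ((Submodule.torsion ℤ
          ((Fin n ⊕ Fin (s - 1) → ℤ) ⧸ LinearMap.range (Matrix.mulVecLin (lap cE')))) ≃+
        ((Fin (s - 2) → ZMod (e * s)) × A)) := by
  classical
  have hNne : (e * s : ℕ) ≠ 0 := Nat.mul_ne_zero (by omega) (by omega)
  -- divisibility of chain rows
  have hdvd : ∀ (t : Fin (s - 1)) (y : Fin n ⊕ Fin (s - 1)),
      ((e * s : ℕ) : ℤ) ∣ lap cE' (Sum.inr t) y :=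
    fun t y => ⟨_, row_fact hvv' hs e cE' hchain hzero t y⟩
  -- ψ kills the range of the Laplacian
  have hψ0 : ∀ x, psi n s (e * s) (Matrix.mulVecLin (lap cE') x) = 0 := by
    intro x
    funext κ
    show (∑ t : Fin (s - 1), if κ.val + 1 ≤ t.val then
        ((Matrix.mulVecLin (lap cE') x (Sum.inr t) : ℤ) : ZMod (e * s)) else 0) = 0
    apply Finset.sum_eq_zero
    intro t _
    split
    · rw [ZMod.intCast_zmod_eq_zero_iff_dvd]
      show ((e * s : ℕ) : ℤ) ∣ _
      have : Matrix.mulVecLin (lap cE') x (Sum.inr t) =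
          ∑ y, lap cE' (Sum.inr t) y * x y := by
        rw [Matrix.mulVecLin_apply]; rfl
      rw [this]
      exact Finset.dvd_sum fun y _ => Dvd.dvd.mul_right (hdvd t y) _
    · rfl
  -- the quotient map
  let π₀ := Submodule.liftQ (LinearMap.range (Matrix.mulVecLin (lap cE'))) (psi n s (e * s))
    (by rintro y ⟨x, rfl⟩; exact hψ0 x)
  -- torsion elements
  let β : Fin (s - 2) → (Fin n ⊕ Fin (s - 1) → ℤ) := fun κ =>
    Sum.elim (fun x : Fin n => if x = v' then (1 : ℤ) else 0)
      (fun t : Fin (s - 1) => (if t.val = κ.val + 1 then (1 : ℤ) else 0) -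
        (if t.val = κ.val then 1 else 0) - (if t.val = 0 then 1 else 0))
  have hNmk : ∀ κ : Fin (s - 2), ((e * s : ℕ) : ℤ) •
      (Submodule.Quotient.mk (β κ) :
        (Fin n ⊕ Fin (s - 1) → ℤ) ⧸ LinearMap.range (Matrix.mulVecLin (lap cE'))) = 0 := by
    intro κ
    rw [← Submodule.Quotient.mk_smul, Submodule.Quotient.mk_eq_zero]
    exact ⟨Sum.elim (fun _ : Fin n => (0 : ℤ))
      (fun t : Fin (s - 1) => if t.val ≤ κ.val then -1 else 0),
      mulVec_xw hvv' hs e cE' hchain hzero κ⟩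
  have hTmem : ∀ κ : Fin (s - 2), (Submodule.Quotient.mk (β κ) :
      (Fin n ⊕ Fin (s - 1) → ℤ) ⧸ LinearMap.range (Matrix.mulVecLin (lap cE'))) ∈
      Submodule.torsion ℤ _ :=
    fun κ => ⟨⟨((e * s : ℕ) : ℤ),
      mem_nonZeroDivisors_of_ne_zero (by exact_mod_cast hNne)⟩, hNmk κ⟩
  set T := Submodule.torsion ℤ
    ((Fin n ⊕ Fin (s - 1) → ℤ) ⧸ LinearMap.range (Matrix.mulVecLin (lap cE'))) with hT
  let α : Fin (s - 2) → T := fun κ => ⟨Submodule.Quotient.mk (β κ), hTmem κ⟩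
  have hNα : ∀ κ : Fin (s - 2), (zmultiplesHom T (α κ)) (((e * s : ℕ) : ℤ)) = 0 := by
    intro κ
    rw [zmultiplesHom_apply]
    refine Subtype.ext ?_
    rw [AddSubgroupClass.coe_zsmul]
    simpa using hNmk κ
  let σ : (Fin (s - 2) → ZMod (e * s)) →+ T :=
    ∑ κ : Fin (s - 2), (ZMod.lift (e * s) ⟨zmultiplesHom T (α κ), hNα κ⟩).comp
      (Pi.evalAddMonoidHom (fun _ : Fin (s - 2) => ZMod (e * s)) κ)
  let π : T →+ (Fin (s - 2) → ZMod (e * s)) :=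
    (π₀.comp (Submodule.torsion ℤ _).subtype).toAddMonoidHom
  have hπα : ∀ κ : Fin (s - 2), π (α κ) = Pi.single κ 1 := by
    intro κ
    show π₀ (Submodule.Quotient.mk (β κ)) = _
    rw [Submodule.liftQ_apply]
    exact psi_beta (e * s) v' κ
  have key : ∀ (κ : Fin (s - 2)) (c : ZMod (e * s)),
      π (σ (Pi.single κ c)) = Pi.single κ c := by
    intro κ c
    obtain ⟨z, rfl⟩ := ZMod.intCast_surjective c
    have hσ : σ (Pi.single κ ((z : ZMod (e * s)))) = z • α κ := by
      show (∑ κ₂ : Fin (s - 2), (ZMod.lift (e * s) ⟨zmultiplesHom T (α κ₂), hNα κ₂⟩).comp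
        (Pi.evalAddMonoidHom (fun _ : Fin (s - 2) => ZMod (e * s)) κ₂))
          (Pi.single κ ((z : ZMod (e * s)))) = z • α κ
      rw [AddMonoidHom.finset_sum_apply]
      rw [Finset.sum_eq_single κ]
      · simp only [AddMonoidHom.coe_comp, Function.comp_apply, Pi.evalAddMonoidHom_apply,
          Pi.single_eq_same]
        rw [ZMod.lift_coe, zmultiplesHom_apply]
      · intro b _ hb
        simp only [AddMonoidHom.coe_comp, Function.comp_apply, Pi.evalAddMonoidHom_apply]
        rw [Pi.single_eq_of_ne hb, map_zero]
      · intro hκ2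
        exact absurd (Finset.mem_univ κ) hκ2
    rw [hσ, map_zsmul, hπα, ← Pi.single_smul, zsmul_eq_mul, mul_one]
  have hπσ : ∀ q, π (σ q) = q := by
    intro q
    have hq : q = ∑ κ : Fin (s - 2), Pi.single κ (q κ) := (Finset.univ_sum_single q).symm
    rw [hq, map_sum, map_sum]
    exact Finset.sum_congr rfl fun κ _ => key κ (q κ)
  exact exists_summand σ π hπσ
end

section
/- Let G be a connected graph and v_i, v_j distinct vertices. The image of e_i − e_j in ℤ^n/Im(L(G)) is trivial (order 1) if and only if there is a path P from v_i to v_j such that every edge of P is a bridge of G. -/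
namespace BP
variable {n : ℕ}

lemma csym (cE : Sym2 (Fin n) → ℕ) (a b : Fin n) : cE s(a,b) = cE s(b,a) := by
  rw [Sym2.eq_swap]

lemma lap_mulVec (cE : Sym2 (Fin n) → ℕ) (hloop : ∀ x : Fin n, cE s(x,x) = 0)
    (x : Fin n → ℤ) (v : Fin n) :
    (lap cE).mulVec x v = ∑ u : Fin n, (cE s(v,u) : ℤ) * (x v - x u) := by
  have : (lap cE).mulVec x v = ∑ u : Fin n, lap cE v u * x u := by
    simp [Matrix.mulVec, dotProduct]
  rw [this]
  have hd : ∀ u : Fin n, lap cE v u * x u =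
      (if v = u then (∑ k : Fin n, (cE s(v,k) : ℤ)) * x v else 0) - (cE s(v,u) : ℤ) * x u := by
    intro u
    by_cases h : v = u
    · subst h; simp [lap, hloop v]
    · simp [lap, h]
  rw [Finset.sum_congr rfl fun u _ => hd u, Finset.sum_sub_distrib]
  rw [Finset.sum_ite_eq (Finset.univ) v (fun _ => (∑ k : Fin n, (cE s(v,k) : ℤ)) * x v)]
  simp only [mul_comm, sub_mul, Finset.sum_sub_distrib, Finset.mul_sum, Finset.sum_mul,
    Finset.mem_univ, if_true]


lemma antisym_sum_zero (S : Finset (Fin n)) (f : Fin n → Fin n → ℤ)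
    (hf : ∀ v u, f v u = - f u v) : ∑ v ∈ S, ∑ u ∈ S, f v u = 0 := by
  have h2 : (∑ v ∈ S, ∑ u ∈ S, f v u) = - ∑ v ∈ S, ∑ u ∈ S, f v u := by
    calc ∑ v ∈ S, ∑ u ∈ S, f v u = ∑ v ∈ S, ∑ u ∈ S, f u v := Finset.sum_comm
    _ = ∑ v ∈ S, ∑ u ∈ S, -f v u := by
        exact Finset.sum_congr rfl fun v _ => Finset.sum_congr rfl fun u _ => hf u v
    _ = - ∑ v ∈ S, ∑ u ∈ S, f v u := by simp
  omega

lemma cut_sum (cE : Sym2 (Fin n) → ℕ) (hloop : ∀ x : Fin n, cE s(x,x) = 0)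
    (x : Fin n → ℤ) (S : Finset (Fin n)) :
    ∑ v ∈ S, (lap cE).mulVec x v
      = ∑ v ∈ S, ∑ u ∈ Sᶜ, (cE s(v,u) : ℤ) * (x v - x u) := by
  have h1 : ∀ v ∈ S, (lap cE).mulVec x v
      = (∑ u ∈ S, (cE s(v,u) : ℤ) * (x v - x u)) + ∑ u ∈ Sᶜ, (cE s(v,u) : ℤ) * (x v - x u) := by
    intro v _
    rw [lap_mulVec cE hloop x v, ← Finset.sum_add_sum_compl S]
  rw [Finset.sum_congr rfl h1, Finset.sum_add_distrib]
  have h0 : ∑ v ∈ S, ∑ u ∈ S, (cE s(v,u) : ℤ) * (x v - x u) = 0 := by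
    apply antisym_sum_zero
    intro v u
    rw [csym cE v u]; ring
  rw [h0, zero_add]

lemma indicator_mulVec (cE : Sym2 (Fin n) → ℕ) (hloop : ∀ x : Fin n, cE s(x,x) = 0)
    (S : Finset (Fin n)) (a b : Fin n) (ha : a ∈ S) (hb : b ∉ S)
    (h1 : cE s(a,b) = 1)
    (h0 : ∀ v ∈ S, ∀ u ∉ S, (v ≠ a ∨ u ≠ b) → cE s(v,u) = 0) :
    (lap cE).mulVec (fun v => if v ∈ S then (1:ℤ) else 0)
      = Pi.single a 1 - Pi.single b 1 := by
  funext v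
  rw [lap_mulVec cE hloop]
  have hab : a ≠ b := fun h => hb (h ▸ ha)
  by_cases hv : v ∈ S
  · have hvb : v ≠ b := fun h => hb (h ▸ hv)
    have : ∀ u : Fin n, (cE s(v,u) : ℤ) * ((if v ∈ S then (1:ℤ) else 0) - (if u ∈ S then (1:ℤ) else 0))
        = if u ∈ S then 0 else (cE s(v,u) : ℤ) := by
      intro u
      by_cases hu : u ∈ S <;> simp [hv, hu]
    rw [Finset.sum_congr rfl fun u _ => this u]
    by_cases hva : v = a
    · subst hva
      rw [Finset.sum_eq_single b]
      · simp [hb, h1, Pi.single_apply, hab, hvb]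
      · intro u _ hub
        by_cases hu : u ∈ S
        · simp [hu]
        · simp [hu, h0 v hv u hu (Or.inr hub)]
      · simp
    · rw [Finset.sum_eq_zero]
      · simp [Pi.single_apply, hva, hvb]
      · intro u _
        by_cases hu : u ∈ S
        · simp [hu]
        · simp [hu, h0 v hv u hu (Or.inl hva)]
  · have hva : v ≠ a := fun h => hv (h ▸ ha)
    have : ∀ u : Fin n, (cE s(v,u) : ℤ) * ((if v ∈ S then (1:ℤ) else 0) - (if u ∈ S then (1:ℤ) else 0))
        = if u ∈ S then -(cE s(v,u) : ℤ) else 0 := by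
      intro u
      by_cases hu : u ∈ S <;> simp [hv, hu]
    rw [Finset.sum_congr rfl fun u _ => this u]
    by_cases hvb : v = b
    · subst hvb
      rw [Finset.sum_eq_single a]
      · have : cE s(v,a) = 1 := by rw [csym cE v a]; exact h1
        simp [ha, this, Pi.single_apply, hva]
      · intro u _ hua
        by_cases hu : u ∈ S
        · have : cE s(v,u) = 0 := by rw [csym cE v u]; exact h0 u hu v hv (Or.inl hua)
          simp [hu, this]
        · simp [hu]
      · simp
    · rw [Finset.sum_eq_zero]
      · simp [Pi.single_apply, hva, hvb]
      · intro u _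
        by_cases hu : u ∈ S
        · have : cE s(v,u) = 0 := by rw [csym cE v u]; exact h0 u hu v hv (Or.inr hvb)
          simp [hu, this]
        · simp [hu]


lemma walk_closed {G : SimpleGraph (Fin n)} {S : Set (Fin n)}
    (hS : ∀ p q, p ∈ S → G.Adj p q → q ∈ S) :
    ∀ {a b : Fin n}, G.Walk a b → a ∈ S → b ∈ S := by
  intro a b w
  induction w with
  | nil => exact fun h => h
  | cons h p ih => exact fun ha => ih (hS _ _ ha h)

lemma not_connected_of_closed {G : SimpleGraph (Fin n)} {S : Set (Fin n)}
    (hS : ∀ p q, p ∈ S → G.Adj p q → q ∈ S) {a b : Fin n}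
    (ha : a ∈ S) (hb : b ∉ S) : ¬ G.Connected := by
  intro hc
  obtain ⟨w⟩ := hc.preconnected a b
  exact hb (walk_closed hS w ha)

lemma eq_univ_of_closed {G : SimpleGraph (Fin n)} (hc : G.Connected) {S : Set (Fin n)}
    (hS : ∀ p q, p ∈ S → G.Adj p q → q ∈ S) {a : Fin n} (ha : a ∈ S) :
    ∀ v, v ∈ S := by
  intro v
  obtain ⟨w⟩ := hc.preconnected a v
  exact walk_closed hS w ha

lemma sum_eq_one_int {α : Type} [DecidableEq α] (s : Finset α) (f : α → ℤ)
    (h0 : ∀ a ∈ s, 0 ≤ f a) (h1 : ∑ a ∈ s, f a = 1) :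
    ∃ a ∈ s, f a = 1 ∧ ∀ b ∈ s, b ≠ a → f b = 0 := by
  have hex : ∃ a ∈ s, f a ≠ 0 := by
    by_contra h
    push_neg at h
    rw [Finset.sum_eq_zero h] at h1
    omega
  obtain ⟨a, has, hfa⟩ := hex
  have hsplit : f a + ∑ b ∈ s.erase a, f b = 1 := by
    rw [Finset.add_sum_erase s f has]; exact h1
  have hrest0 : 0 ≤ ∑ b ∈ s.erase a, f b :=
    Finset.sum_nonneg fun b hb => h0 b (Finset.mem_of_mem_erase hb)
  have hfa1 : f a = 1 := by
    have := h0 a has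
    omega
  refine ⟨a, has, hfa1, ?_⟩
  have hz : ∑ b ∈ s.erase a, f b = 0 := by omega
  intro b hbs hba
  have := (Finset.sum_eq_zero_iff_of_nonneg
    (fun c hc => h0 c (Finset.mem_of_mem_erase hc))).mp hz b (Finset.mem_erase.mpr ⟨hba, hbs⟩)
  exact this


lemma fwd (cE : Sym2 (Fin n) → ℕ) (hloop : ∀ x : Fin n, cE s(x,x) = 0)
    (hconn : (mgraph cE).Connected) :
    ∀ (d : ℕ) (x : Fin n → ℤ) (i j : Fin n), i ≠ j →
      (lap cE).mulVec x = Pi.single i 1 - Pi.single j 1 →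
      x i - x j ≤ (d : ℤ) →
      ∃ w : (mgraph cE).Walk i j, ∀ a b : Fin n, s(a, b) ∈ w.edges →
        ¬ (mgraph (fun e0 => if e0 = s(a, b) then cE e0 - 1 else cE e0)).Connected := by
  intro d
  induction d using Nat.strong_induction_on with
  | _ d IH =>
  intro x i j hij hLx hbound
  have hLx' : ∀ v, (lap cE).mulVec x v = (if v = i then 1 else 0) - (if v = j then 1 else 0) := by
    intro v
    have := congrFun hLx v
    simpa [Pi.single_apply] using this
  -- Step 1: x j is the minimum
  have hxj : ∀ v, x j ≤ x v := by
    by_contra hcon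
    push_neg at hcon
    obtain ⟨v0, hv0⟩ := hcon
    obtain ⟨m, _, hmin⟩ := Finset.exists_min_image Finset.univ x ⟨i, Finset.mem_univ i⟩
    have hmj : x m < x j := lt_of_le_of_lt (hmin v0 (Finset.mem_univ v0)) hv0
    set S := Finset.univ.filter (fun v => x v = x m) with hSdef
    have hjS : j ∉ S := by simp [hSdef]; omega
    have hcut := cut_sum cE hloop x S
    have hlhs : ∑ v ∈ S, (lap cE).mulVec x v = (if i ∈ S then 1 else 0) := by
      rw [Finset.sum_congr rfl fun v _ => hLx' v, Finset.sum_sub_distrib]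
      simp [Finset.sum_ite_eq' S, hjS]
    have htm : ∀ v ∈ S, ∀ u ∈ Sᶜ, (cE s(v,u) : ℤ) * (x v - x u) ≤ 0 := by
      intro v hv u hu
      simp [hSdef] at hv hu
      have h1 : x v - x u < 0 := by
        have := hmin u (Finset.mem_univ u)
        omega
      have h2 : (0:ℤ) ≤ (cE s(v,u) : ℤ) := Int.natCast_nonneg _
      nlinarith
    have hrhs_nonpos : ∑ v ∈ S, ∑ u ∈ Sᶜ, (cE s(v,u) : ℤ) * (x v - x u) ≤ 0 :=
      Finset.sum_nonpos fun v hv => Finset.sum_nonpos fun u hu => htm v hv u hu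
    have hzero : ∑ v ∈ S, ∑ u ∈ Sᶜ, (cE s(v,u) : ℤ) * (x v - x u) = 0 := by
      rw [hcut] at hlhs
      rw [hlhs] at hrhs_nonpos ⊢
      by_cases hi : i ∈ S <;> simp [hi] at hrhs_nonpos ⊢
    have hall0 : ∀ v ∈ S, ∀ u ∈ Sᶜ, (cE s(v,u) : ℤ) * (x v - x u) = 0 := by
      intro v hv u hu
      have houter := (Finset.sum_eq_zero_iff_of_nonpos
        (fun v hv => Finset.sum_nonpos fun u hu => htm v hv u hu)).mp hzero v hv
      exact (Finset.sum_eq_zero_iff_of_nonpos (fun u hu => htm v hv u hu)).mp houter u hu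
    have hclosed : ∀ p q : Fin n, p ∈ {v | x v = x m} → (mgraph cE).Adj p q → q ∈ {v | x v = x m} := by
      intro p q hp hadj
      by_contra hq
      simp at hp hq
      have hpS : p ∈ S := by simp [hSdef, hp]
      have hqS : q ∈ Sᶜ := by simp [hSdef]; omega
      have := hall0 p hpS q hqS
      have hne : x p - x q < 0 := by
        have := hmin q (Finset.mem_univ q)
        omega
      have hcpos : 0 < cE s(p,q) := hadj.2
      nlinarith [this, hne, hcpos]
    have : j ∈ {v | x v = x m} := eq_univ_of_closed hconn hclosed (by simp : m ∈ {v | x v = x m}) j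
    simp at this
    omega
  -- Step 2: the cut above the minimum level
  set S := Finset.univ.filter (fun v => x j < x v) with hSdef
  have hjS : j ∉ S := by simp [hSdef]
  have hcut := cut_sum cE hloop x S
  have hlhs : ∑ v ∈ S, (lap cE).mulVec x v = (if i ∈ S then 1 else 0) := by
    rw [Finset.sum_congr rfl fun v _ => hLx' v, Finset.sum_sub_distrib]
    simp [Finset.sum_ite_eq' S, hjS]
  have hxcomp : ∀ u ∈ Sᶜ, x u = x j := by
    intro u hu
    simp [hSdef] at hu
    have := hxj u
    omega
  have htm : ∀ v ∈ S, ∀ u ∈ Sᶜ, 0 ≤ (cE s(v,u) : ℤ) * (x v - x u) := by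
    intro v hv u hu
    have h1 : 0 ≤ x v - x u := by
      have h2 := hxcomp u hu
      simp [hSdef] at hv
      omega
    exact mul_nonneg (Int.natCast_nonneg _) h1
  have hiS : i ∈ S := by
    by_contra hiS
    have hzero : ∑ v ∈ S, ∑ u ∈ Sᶜ, (cE s(v,u) : ℤ) * (x v - x u) = 0 := by
      rw [← hcut, hlhs]; simp [hiS]
    have hall0 : ∀ v ∈ S, ∀ u ∈ Sᶜ, (cE s(v,u) : ℤ) * (x v - x u) = 0 := by
      intro v hv u hu
      have houter := (Finset.sum_eq_zero_iff_of_nonneg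
        (fun v hv => Finset.sum_nonneg fun u hu => htm v hv u hu)).mp hzero v hv
      exact (Finset.sum_eq_zero_iff_of_nonneg (fun u hu => htm v hv u hu)).mp houter u hu
    have hclosed : ∀ p q : Fin n, p ∈ {v | x j < x v} → (mgraph cE).Adj p q →
        q ∈ {v | x j < x v} := by
      intro p q hp hadj
      by_contra hq
      simp at hp hq
      have hpS : p ∈ S := by simp [hSdef]; exact hp
      have hqS : q ∈ Sᶜ := by simp [hSdef]; omega
      have h00 := hall0 p hpS q hqS
      have h1 : 0 < x p - x q := by
        have := hxj q; omega
      have hc : 0 < cE s(p,q) := hadj.2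
      nlinarith
    have hconst : ∀ v, x v = x j := by
      intro v
      by_contra hv
      have hvS : v ∈ {v | x j < x v} := by
        have := hxj v
        simp
        omega
      have := eq_univ_of_closed hconn hclosed hvS j
      simp at this
    have h1 : (lap cE).mulVec x i = 1 := by rw [hLx' i]; simp [hij]
    rw [lap_mulVec cE hloop] at h1
    rw [Finset.sum_eq_zero (fun u _ => by rw [hconst i, hconst u]; ring)] at h1
    exact absurd h1 (by norm_num)
  -- Step 3: unique crossing edge
  have hsum1 : ∑ p ∈ S ×ˢ Sᶜ, (cE s(p.1,p.2) : ℤ) * (x p.1 - x p.2) = 1 := by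
    rw [Finset.sum_product, ← hcut, hlhs]
    simp [hiS]
  obtain ⟨p0, hp0mem, hp0one, hp0zero⟩ := sum_eq_one_int _ _
    (fun p hp => htm p.1 (Finset.mem_product.mp hp).1 p.2 (Finset.mem_product.mp hp).2) hsum1
  obtain ⟨a, b⟩ := p0
  simp only at hp0one
  have haS : a ∈ S := (Finset.mem_product.mp hp0mem).1
  have hbS : b ∈ Sᶜ := (Finset.mem_product.mp hp0mem).2
  have hxb : x b = x j := hxcomp b hbS
  have hxa : x j < x a := by
    have := haS
    simp [hSdef] at this
    exact this
  have hc1 : cE s(a,b) = 1 ∧ x a - x b = 1 := by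
    rcases Int.mul_eq_one_iff_eq_one_or_neg_one.mp hp0one with ⟨h1, h2⟩ | ⟨h1, h2⟩
    · exact ⟨by exact_mod_cast h1, h2⟩
    · exfalso; omega
  have h0 : ∀ v ∈ S, ∀ u ∉ S, (v ≠ a ∨ u ≠ b) → cE s(v,u) = 0 := by
    intro v hv u hu hne
    have hmem : (v,u) ∈ S ×ˢ Sᶜ := Finset.mem_product.mpr ⟨hv, Finset.mem_compl.mpr hu⟩
    have hpair : ((v,u) : Fin n × Fin n) ≠ (a,b) := by
      intro heq
      rcases hne with h | h
      · exact h (congrArg Prod.fst heq)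
      · exact h (congrArg Prod.snd heq)
    have hterm := hp0zero (v,u) hmem hpair
    simp only at hterm
    have hpos : 0 < x v - x u := by
      have h3 : x u = x j := hxcomp u (Finset.mem_compl.mpr hu)
      simp [hSdef] at hv
      omega
    rcases mul_eq_zero.mp hterm with h | h
    · exact_mod_cast h
    · omega
  -- Step 5: b = j
  have hbj : b = j := by
    by_contra hbj
    have hbnS : b ∉ S := Finset.mem_compl.mp hbS
    have hbi : b ≠ i := fun h => hbnS (h ▸ hiS)
    have h1 : (lap cE).mulVec x b = 0 := by rw [hLx' b]; simp [hbi, hbj]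
    rw [lap_mulVec cE hloop] at h1
    have hba : cE s(b,a) = 1 := by rw [csym cE b a]; exact hc1.1
    have hterm : (cE s(b,a) : ℤ) * (x b - x a) = -1 := by
      rw [hba]
      have := hc1.2
      push_cast
      omega
    have hrest : ∀ u ∈ Finset.univ.erase a, (cE s(b,u) : ℤ) * (x b - x u) ≤ 0 := by
      intro u _
      have h2 : x b - x u ≤ 0 := by have := hxj u; omega
      exact mul_nonpos_of_nonneg_of_nonpos (Int.natCast_nonneg _) h2
    have hle : ∑ u : Fin n, (cE s(b,u) : ℤ) * (x b - x u) ≤ -1 := by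
      rw [← Finset.add_sum_erase Finset.univ _ (Finset.mem_univ a), hterm]
      have := Finset.sum_nonpos hrest
      omega
    omega
  have hbj' : j = b := hbj.symm
  subst hbj'
  have haj : a ≠ j := fun h => hjS (h ▸ haS)
  have hadj : (mgraph cE).Adj a j := ⟨haj, by have := hc1.1; omega⟩
  -- Step 6: the crossing edge is a bridge
  have hbridge : ¬ (mgraph (fun e0 => if e0 = s(a,j) then cE e0 - 1 else cE e0)).Connected := by
    refine not_connected_of_closed (S := {v | x j < x v}) ?_ (a := i) (b := j) ?_ ?_
    · intro p q hp hadj'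
      simp only [Set.mem_setOf_eq] at hp ⊢
      by_contra hq
      have hqx : x q = x j := by have := hxj q; omega
      obtain ⟨hpq, hcpos⟩ := hadj'
      by_cases he : s(p,q) = s(a,j)
      · simp only [mgraph] at hcpos
        rw [if_pos he] at hcpos
        have h2 : cE s(p,q) = 1 := by rw [he]; exact hc1.1
        omega
      · simp only [mgraph] at hcpos
        rw [if_neg he] at hcpos
        have hne : p ≠ a ∨ q ≠ j := by
          by_contra hh
          push_neg at hh
          exact he (by rw [hh.1, hh.2])
        have h0' := h0 p (by simp [hSdef]; exact hp) q (by simp [hSdef]; omega) hne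
        omega
    · have := hiS; simp [hSdef] at this; simpa using this
    · simp
  -- Step 7: the reduced certificate
  set x' : Fin n → ℤ := fun v => x v - (if v ∈ S then 1 else 0) with hx'def
  have hLind := indicator_mulVec cE hloop S a j haS hjS hc1.1 h0
  have hLx2 : (lap cE).mulVec x' = Pi.single i 1 - Pi.single a 1 := by
    have hxx : x' = x - (fun v => if v ∈ S then (1:ℤ) else 0) := by
      funext v; simp [hx'def]
    rw [hxx, Matrix.mulVec_sub, hLx, hLind]
    funext v
    simp only [Pi.sub_apply]
    ring
  -- Step 8: conclude
  by_cases hai : a = i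
  · subst hai
    refine ⟨SimpleGraph.Walk.cons hadj SimpleGraph.Walk.nil, ?_⟩
    intro p q hmem
    simp [SimpleGraph.Walk.edges_cons] at hmem
    rcases hmem with ⟨rfl, rfl⟩ | ⟨rfl, rfl⟩
    · exact hbridge
    · rw [show s(p, q) = s(q, p) from Sym2.eq_swap]
      exact hbridge
  · have hxi : x j < x i := by
      have := hiS; simp [hSdef] at this; exact this
    have hxi' : x' i = x i - 1 := by simp [hx'def, hiS]
    have hxa' : x' a = x a - 1 := by simp [hx'def, haS]
    have hbound' : x' i - x' a ≤ ((d-1 : ℕ) : ℤ) := by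
      rw [hxi', hxa']
      have h2 := hc1.2
      omega
    obtain ⟨w', hw'⟩ := IH (d-1) (by have h2 := hc1.2; omega) x' i a (Ne.symm hai) hLx2 hbound'
    refine ⟨w'.concat hadj, ?_⟩
    intro p q hmem
    rw [SimpleGraph.Walk.edges_concat, List.concat_eq_append] at hmem
    rcases List.mem_append.mp hmem with h | h
    · exact hw' p q h
    · rw [List.mem_singleton.mp h]
      exact hbridge


lemma bwd (cE : Sym2 (Fin n) → ℕ) (hloop : ∀ x : Fin n, cE s(x,x) = 0)
    (hconn : (mgraph cE).Connected) :
    ∀ (i j : Fin n) (w : (mgraph cE).Walk i j),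
      (∀ a b : Fin n, s(a, b) ∈ w.edges →
        ¬ (mgraph (fun e0 => if e0 = s(a, b) then cE e0 - 1 else cE e0)).Connected) →
      ∃ x : Fin n → ℤ, (lap cE).mulVec x = Pi.single i 1 - Pi.single j 1 := by
  intro i j w
  induction w with
  | nil => exact fun _ => ⟨0, by simp⟩
  | @cons i k j hadj p ih =>
    intro hcond
    obtain ⟨x', hx'⟩ := ih (fun a b h => hcond a b
      (by rw [SimpleGraph.Walk.edges_cons]; exact List.mem_cons_of_mem _ h))
    have hbr := hcond i k (by rw [SimpleGraph.Walk.edges_cons]; exact List.mem_cons_self)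
    set cE' := fun e0 => if e0 = s(i,k) then cE e0 - 1 else cE e0 with hcE'
    have hcik_pos : 0 < cE s(i,k) := hadj.2
    have hik : i ≠ k := hadj.1
    have hc1 : cE s(i,k) = 1 := by
      by_contra hc
      have hge : 2 ≤ cE s(i,k) := by omega
      have heq : mgraph cE' = mgraph cE := by
        ext a b
        simp only [mgraph, hcE']
        constructor
        · rintro ⟨hab, hpos⟩
          refine ⟨hab, ?_⟩
          by_cases he : s(a,b) = s(i,k)
          · rw [if_pos he] at hpos; omega
          · rwa [if_neg he] at hpos
        · rintro ⟨hab, hpos⟩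
          refine ⟨hab, ?_⟩
          by_cases he : s(a,b) = s(i,k)
          · rw [if_pos he]
            have : cE s(a,b) = cE s(i,k) := by rw [he]
            omega
          · rwa [if_neg he]
      exact hbr (heq ▸ hconn)
    classical
    set Sf := Finset.univ.filter (fun v => (mgraph cE').Reachable i v) with hSf
    have hiSf : i ∈ Sf := by simp only [hSf, Finset.mem_filter, Finset.mem_univ, true_and]; exact SimpleGraph.Reachable.refl i
    have hkSf : k ∉ Sf := by
      intro hk
      simp only [hSf, Finset.mem_filter, Finset.mem_univ, true_and] at hk
      have hclosed : ∀ p q : Fin n, p ∈ {v | (mgraph cE').Reachable i v} →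
          (mgraph cE).Adj p q → q ∈ {v | (mgraph cE').Reachable i v} := by
        intro p q hp hadj2
        simp only [Set.mem_setOf_eq] at hp ⊢
        by_cases he : s(p,q) = s(i,k)
        · rcases Sym2.eq_iff.mp he with ⟨rfl, rfl⟩ | ⟨rfl, rfl⟩
          · exact hk
          · exact SimpleGraph.Reachable.refl _
        · have hadj3 : (mgraph cE').Adj p q := by
            refine ⟨hadj2.1, ?_⟩
            simp only [hcE', if_neg he]
            exact hadj2.2
          exact hp.trans hadj3.reachable
      have huniv := eq_univ_of_closed hconn hclosed
        (show i ∈ {v | (mgraph cE').Reachable i v} from SimpleGraph.Reachable.refl i)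
      have hne : Nonempty (Fin n) := ⟨i⟩
      exact hbr ⟨fun a b => (huniv a).symm.trans (huniv b)⟩
    have h0 : ∀ v ∈ Sf, ∀ u ∉ Sf, (v ≠ i ∨ u ≠ k) → cE s(v,u) = 0 := by
      intro v hv u hu hne
      by_contra hc
      have hcpos : 0 < cE s(v,u) := Nat.pos_of_ne_zero hc
      have hvu : v ≠ u := by rintro rfl; exact hu hv
      simp only [hSf, Finset.mem_filter, Finset.mem_univ, true_and] at hv hu
      by_cases he : s(v,u) = s(i,k)
      · rcases Sym2.eq_iff.mp he with ⟨rfl, rfl⟩ | ⟨rfl, rfl⟩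
        · rcases hne with h | h
          · exact h rfl
          · exact h rfl
        · exact hu (SimpleGraph.Reachable.refl _)
      · have hadj3 : (mgraph cE').Adj v u := by
          refine ⟨hvu, ?_⟩
          simp only [hcE', if_neg he]
          exact hcpos
        exact hu (hv.trans hadj3.reachable)
    have hind := indicator_mulVec cE hloop Sf i k hiSf hkSf hc1 h0
    refine ⟨(fun v => if v ∈ Sf then (1:ℤ) else 0) + x', ?_⟩
    rw [Matrix.mulVec_add, hind, hx']
    funext v
    simp only [Pi.add_apply, Pi.sub_apply]
    ring

end BP

/-- the class of `e_i − e_j` in `ℤ^n/Im(L(G))` is trivial iff there is a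
path from `v_i` to `v_j` all of whose edges are bridges of `G`. -/
theorem order_one_iff_bridge_path {n : ℕ} (cE : Sym2 (Fin n) → ℕ)
    (hloop : ∀ x : Fin n, cE s(x, x) = 0)
    (hconn : (mgraph cE).Connected)
    (i j : Fin n) (hij : i ≠ j) :
    (∃ x : Fin n → ℤ, (lap cE).mulVec x = Pi.single i 1 - Pi.single j 1) ↔
      ∃ w : (mgraph cE).Walk i j, ∀ a b : Fin n, s(a, b) ∈ w.edges →
        ¬ (mgraph (fun e0 => if e0 = s(a, b) then cE e0 - 1 else cE e0)).Connected := by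
  constructor
  · rintro ⟨x, hx⟩
    exact BP.fwd cE hloop hconn (x i - x j).toNat x i j hij hx (Int.self_le_toNat _)
  · rintro ⟨w, hw⟩
    exact BP.bwd cE hloop hconn i j w hw
end

section
/- Let G be the graph with two vertices v, w joined by d internally disjoint chains of lengths n_1,…,n_d. Then the image of e_v − e_w in ℤ^n/Im(L(G)) has order lcm(n_1,…,n_d)·(Σ_{i=1}^d 1/n_i) = Σ_{i=1}^d lcm(n_1,…,n_d)/n_i. -/
set_option maxHeartbeats 1000000

/-- for the graph with two vertices `v`, `w` joined by `d` internally disjoint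
chains of lengths `n₁, …, n_d`, the class of `e_v − e_w` in `ℤ^n/Im(L(G))` has order
`lcm(n₁,…,n_d)·(Σᵢ 1/nᵢ) = Σᵢ lcm(n₁,…,n_d)/nᵢ`. -/
theorem chains_order_of_Evw {V : Type} [Fintype V] [DecidableEq V]
    (cE : Sym2 V → ℕ) (d : ℕ) (hd : 1 ≤ d) (n : Fin d → ℕ) (hn : ∀ i, 1 ≤ n i)
    (v w : V) (p : (i : Fin d) → Fin (n i + 1) → V)
    (hp0 : ∀ k, p k 0 = v) (hpl : ∀ k, p k (Fin.last (n k)) = w)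
    (hinj : ∀ k k' (i : Fin (n k + 1)) (i' : Fin (n k' + 1)), p k i = p k' i' →
      ((i : ℕ) = 0 ∧ (i' : ℕ) = 0) ∨ ((i : ℕ) = n k ∧ (i' : ℕ) = n k') ∨
        (k = k' ∧ (i : ℕ) = (i' : ℕ)))
    (hsurj : ∀ x : V, ∃ k i, p k i = x)
    (hedge : ∀ e0 : Sym2 V, cE e0 = (Finset.univ.filter (fun q : Σ i : Fin d, Fin (n i) =>
        s(p q.1 q.2.castSucc, p q.1 q.2.succ) = e0)).card) :
    IsLeast {m : ℕ | 0 < m ∧ ∃ x : V → ℤ,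
        (lap cE).mulVec x = (m : ℤ) • (Pi.single v 1 - Pi.single w 1)}
      (∑ i : Fin d, Finset.univ.lcm n / n i) := by
  classical
  set L : ℕ := Finset.univ.lcm n with hLdef
  have hdvd : ∀ k, n k ∣ L := fun k => Finset.dvd_lcm (Finset.mem_univ k)
  have hLpos : 0 < L := by
    rcases Nat.eq_zero_or_pos L with h | h
    · exfalso
      rw [hLdef, Finset.lcm_eq_zero_iff] at h
      obtain ⟨k, -, hk⟩ := h
      exact absurd hk.symm (by have := hn k; omega)
    · exact h
  set m₀ : ℕ := ∑ i : Fin d, L / n i with hm₀def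
  have hm₀pos : 0 < m₀ := by
    have : Nonempty (Fin d) := ⟨⟨0, hd⟩⟩
    exact Finset.sum_pos
      (fun i _ => Nat.div_pos (Nat.le_of_dvd hLpos (hdvd i)) (hn i)) Finset.univ_nonempty
  -- positions
  have hvw : v ≠ w := by
    intro h
    have := hinj ⟨0, hd⟩ ⟨0, hd⟩ 0 (Fin.last _) (by rw [hp0, hpl, h])
    have h1 := hn ⟨0, hd⟩
    simp only [Fin.val_zero, Fin.val_last] at this
    omega
  have hPv : ∀ k (i : Fin (n k + 1)), p k i = v ↔ (i : ℕ) = 0 := by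
    intro k i
    constructor
    · intro h
      have h2 := hinj k k i 0 (by rw [h, hp0])
      have := hn k
      simp only [Fin.val_zero] at h2
      omega
    · intro h
      have : i = 0 := Fin.ext (by simpa using h)
      rw [this, hp0]
  have hPw : ∀ k (i : Fin (n k + 1)), p k i = w ↔ (i : ℕ) = n k := by
    intro k i
    constructor
    · intro h
      have h2 := hinj k k i (Fin.last (n k)) (by rw [h, hpl])
      have := hn k
      simp only [Fin.val_last] at h2
      omega
    · intro h
      have : i = Fin.last (n k) := Fin.ext (by simpa using h)
      rw [this, hpl]
  have noLoop : ∀ (k : Fin d) (j : Fin (n k)), p k j.castSucc ≠ p k j.succ := by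
    intro k j h
    have h2 := hinj k k j.castSucc j.succ h
    have hj := j.isLt
    simp only [Fin.coe_castSucc, Fin.val_succ] at h2
    omega
  have hloop : ∀ a : V, cE s(a, a) = 0 := by
    intro a
    rw [hedge, Finset.card_eq_zero, Finset.filter_eq_empty_iff]
    rintro q -
    intro h
    rw [Sym2.eq_iff] at h
    rcases h with ⟨h1, h2⟩ | ⟨h1, h2⟩ <;> exact noLoop q.1 q.2 (h1.trans h2.symm)
  -- the Laplacian in incidence form
  have lapEq : ∀ (x : V → ℤ) (a : V), (lap cE).mulVec x a =
      ∑ q : Σ i : Fin d, Fin (n i),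
        ((if p q.1 q.2.castSucc = a then (1 : ℤ) else 0)
          - (if p q.1 q.2.succ = a then 1 else 0)) *
          (x (p q.1 q.2.castSucc) - x (p q.1 q.2.succ)) := by
    intro x a
    have h1 : (lap cE).mulVec x a = ∑ y, (cE s(a, y) : ℤ) * (x a - x y) := by
      simp only [Matrix.mulVec, dotProduct, lap]
      have e1 : ∀ y : V, (if a = y then (∑ k, (cE s(a, k) : ℤ)) else -(cE s(a, y) : ℤ)) * x y
          = (if a = y then ((∑ k, (cE s(a, k) : ℤ)) + (cE s(a, y) : ℤ)) * x y else 0)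
            - (cE s(a, y) : ℤ) * x y := by
        intro y; by_cases h : a = y
        · simp [h]; ring
        · simp [h]
      rw [Finset.sum_congr rfl fun y _ => e1 y, Finset.sum_sub_distrib, Finset.sum_ite_eq]
      simp only [Finset.mem_univ, if_true, hloop a, Nat.cast_zero, add_zero, mul_sub]
      rw [Finset.sum_sub_distrib, ← Finset.sum_mul]
    rw [h1]
    have h2 : ∀ y : V, (cE s(a, y) : ℤ) * (x a - x y) =
        ∑ q : Σ i : Fin d, Fin (n i),
          (if s(p q.1 q.2.castSucc, p q.1 q.2.succ) = s(a, y) then (1 : ℤ) else 0)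
            * (x a - x y) := by
      intro y
      rw [← Finset.sum_mul]
      congr 1
      rw [hedge (s(a, y)), Finset.card_filter]
      push_cast
      rfl
    rw [Finset.sum_congr rfl fun y _ => h2 y, Finset.sum_comm]
    refine Finset.sum_congr rfl fun q _ => ?_
    have huu' : p q.1 q.2.castSucc ≠ p q.1 q.2.succ := noLoop q.1 q.2
    set u := p q.1 q.2.castSucc with hu_def
    set u' := p q.1 q.2.succ with hu'_def
    by_cases hu : u = a
    · have hu' : u' ≠ a := fun h => huu' (hu.trans h.symm)
      have hcond : ∀ y : V, (s(u, u') = s(a, y)) ↔ (y = u') := by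
        intro y; rw [Sym2.eq_iff]; constructor
        · rintro (⟨-, h⟩ | ⟨-, h⟩)
          · exact h.symm
          · exact absurd h hu'
        · rintro rfl; exact Or.inl ⟨hu, rfl⟩
      calc ∑ y, (if s(u, u') = s(a, y) then (1 : ℤ) else 0) * (x a - x y)
          = ∑ y, (if y = u' then (x a - x y) else 0) := by
            refine Finset.sum_congr rfl fun y _ => ?_
            by_cases h : y = u'
            · rw [if_pos ((hcond y).mpr h), if_pos h, one_mul]
            · rw [if_neg (fun hc => h ((hcond y).mp hc)), if_neg h, zero_mul]
        _ = x a - x u' := by rw [Finset.sum_ite_eq']; simp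
        _ = _ := by rw [if_pos hu, if_neg hu', ← hu]; ring
    · by_cases hu' : u' = a
      · have hcond : ∀ y : V, (s(u, u') = s(a, y)) ↔ (y = u) := by
          intro y; rw [Sym2.eq_iff]; constructor
          · rintro (⟨h, -⟩ | ⟨h, -⟩)
            · exact absurd h hu
            · exact h.symm
          · rintro rfl; exact Or.inr ⟨rfl, hu'⟩
        calc ∑ y, (if s(u, u') = s(a, y) then (1 : ℤ) else 0) * (x a - x y)
            = ∑ y, (if y = u then (x a - x y) else 0) := by
              refine Finset.sum_congr rfl fun y _ => ?_
              by_cases h : y = u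
              · rw [if_pos ((hcond y).mpr h), if_pos h, one_mul]
              · rw [if_neg (fun hc => h ((hcond y).mp hc)), if_neg h, zero_mul]
          _ = x a - x u := by rw [Finset.sum_ite_eq']; simp
          _ = _ := by rw [if_neg hu, if_pos hu', ← hu']; ring
      · have hcond : ∀ y : V, ¬ (s(u, u') = s(a, y)) := by
          intro y h; rw [Sym2.eq_iff] at h
          rcases h with ⟨h, -⟩ | ⟨-, h⟩
          · exact hu h
          · exact hu' h
        rw [if_neg hu, if_neg hu']
        rw [Finset.sum_congr rfl fun y _ => by rw [if_neg (hcond y), zero_mul]]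
        simp
  -- split the incidence sum
  have split : ∀ (g : (Σ i : Fin d, Fin (n i)) → ℤ) (a : V),
      ∑ q : Σ i : Fin d, Fin (n i),
        ((if p q.1 q.2.castSucc = a then (1 : ℤ) else 0)
          - (if p q.1 q.2.succ = a then 1 else 0)) * g q
      = (∑ q : Σ i : Fin d, Fin (n i), if p q.1 q.2.castSucc = a then g q else 0)
        - (∑ q : Σ i : Fin d, Fin (n i), if p q.1 q.2.succ = a then g q else 0) := by
    intro g a
    rw [← Finset.sum_sub_distrib]
    refine Finset.sum_congr rfl fun q _ => ?_
    by_cases h1 : p q.1 q.2.castSucc = a <;> by_cases h2 : p q.1 q.2.succ = a <;>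
      simp [h1, h2]
  -- the four boundary sums
  have sumCast_v : ∀ g : (Σ i : Fin d, Fin (n i)) → ℤ,
      (∑ q : Σ i : Fin d, Fin (n i), if p q.1 q.2.castSucc = v then g q else 0)
        = ∑ k : Fin d, g ⟨k, ⟨0, hn k⟩⟩ := by
    intro g
    rw [← Finset.univ_sigma_univ, Finset.sum_sigma]
    refine Finset.sum_congr rfl fun k _ => ?_
    have hc : ∀ j : Fin (n k), (p k j.castSucc = v) ↔ (j = ⟨0, hn k⟩) := by
      intro j
      rw [hPv k j.castSucc, Fin.coe_castSucc, Fin.ext_iff]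
    rw [Finset.sum_congr rfl fun j _ => if_congr (hc j) rfl rfl, Finset.sum_ite_eq']
    simp
  have sumSucc_w : ∀ g : (Σ i : Fin d, Fin (n i)) → ℤ,
      (∑ q : Σ i : Fin d, Fin (n i), if p q.1 q.2.succ = w then g q else 0)
        = ∑ k : Fin d, g ⟨k, ⟨n k - 1, by have := hn k; omega⟩⟩ := by
    intro g
    rw [← Finset.univ_sigma_univ, Finset.sum_sigma]
    refine Finset.sum_congr rfl fun k _ => ?_
    have hc : ∀ j : Fin (n k), (p k j.succ = w) ↔ (j = ⟨n k - 1, by have := hn k; omega⟩) := by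
      intro j
      rw [hPw k j.succ, Fin.val_succ, Fin.ext_iff]
      have := j.isLt
      constructor <;> intro h <;> simp at h ⊢ <;> omega
    rw [Finset.sum_congr rfl fun j _ => if_congr (hc j) rfl rfl, Finset.sum_ite_eq']
    simp
  have sumCast_w : ∀ g : (Σ i : Fin d, Fin (n i)) → ℤ,
      (∑ q : Σ i : Fin d, Fin (n i), if p q.1 q.2.castSucc = w then g q else 0) = 0 := by
    intro g
    refine Finset.sum_eq_zero fun q _ => ?_
    rw [if_neg]
    rw [hPw, Fin.coe_castSucc]
    have := q.2.isLt
    omega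
  have sumSucc_v : ∀ g : (Σ i : Fin d, Fin (n i)) → ℤ,
      (∑ q : Σ i : Fin d, Fin (n i), if p q.1 q.2.succ = v then g q else 0) = 0 := by
    intro g
    refine Finset.sum_eq_zero fun q _ => ?_
    rw [if_neg]
    rw [hPv, Fin.val_succ]
    omega
  -- interior sums
  have sumCast_int : ∀ (g : (Σ i : Fin d, Fin (n i)) → ℤ) (k : Fin d) (i : Fin (n k + 1))
      (h0 : 0 < (i : ℕ)) (h1 : (i : ℕ) < n k),
      (∑ q : Σ i : Fin d, Fin (n i), if p q.1 q.2.castSucc = p k i then g q else 0)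
        = g ⟨k, ⟨(i : ℕ), h1⟩⟩ := by
    intro g k i h0 h1
    have hc : ∀ q : Σ i : Fin d, Fin (n i),
        (p q.1 q.2.castSucc = p k i) ↔ (q = ⟨k, ⟨(i : ℕ), h1⟩⟩) := by
      rintro ⟨k', j⟩
      constructor
      · intro h
        rcases hinj k' k j.castSucc i h with ⟨h2, h3⟩ | ⟨h2, h3⟩ | ⟨h2, h3⟩
        · omega
        · exact absurd h2 (by have := j.isLt; simp only [Fin.coe_castSucc]; omega)
        · subst h2
          have : j = ⟨(i : ℕ), h1⟩ := Fin.ext (by simpa using h3)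
          rw [this]
      · intro h
        rw [h]
        exact congrArg (p k) (Fin.ext rfl)
    rw [Finset.sum_congr rfl fun q _ => if_congr (hc q) rfl rfl, Finset.sum_ite_eq']
    simp
  have sumSucc_int : ∀ (g : (Σ i : Fin d, Fin (n i)) → ℤ) (k : Fin d) (i : Fin (n k + 1))
      (h0 : 0 < (i : ℕ)) (h1 : (i : ℕ) < n k),
      (∑ q : Σ i : Fin d, Fin (n i), if p q.1 q.2.succ = p k i then g q else 0)
        = g ⟨k, ⟨(i : ℕ) - 1, by omega⟩⟩ := by
    intro g k i h0 h1
    have hc : ∀ q : Σ i : Fin d, Fin (n i),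
        (p q.1 q.2.succ = p k i) ↔ (q = ⟨k, ⟨(i : ℕ) - 1, by omega⟩⟩) := by
      rintro ⟨k', j⟩
      constructor
      · intro h
        rcases hinj k' k j.succ i h with ⟨h2, h3⟩ | ⟨h2, h3⟩ | ⟨h2, h3⟩
        · simp only [Fin.val_succ] at h2; omega
        · omega
        · subst h2
          have : j = ⟨(i : ℕ) - 1, by omega⟩ := Fin.ext (by
            simp only [Fin.val_succ] at h3
            show (j : ℕ) = (i : ℕ) - 1
            omega)
          rw [this]
      · intro h
        rw [h]
        exact congrArg (p k) (Fin.ext (by simp only [Fin.val_succ]; omega))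
    rw [Finset.sum_congr rfl fun q _ => if_congr (hc q) rfl rfl, Finset.sum_ite_eq']
    simp
  constructor
  · -- membership
    refine ⟨hm₀pos, ?_⟩
    have hchoice : ∀ a : V, ∃ q : Σ k : Fin d, Fin (n k + 1), p q.1 q.2 = a := by
      intro a; obtain ⟨k, i, h⟩ := hsurj a; exact ⟨⟨k, i⟩, h⟩
    set xv : V → ℤ := fun a =>
      (((L / n (hchoice a).choose.1) * (n (hchoice a).choose.1 - ((hchoice a).choose.2 : ℕ)) : ℕ) : ℤ)
      with hxvdef
    have harith : ∀ (k₀ k : Fin d) (a b : ℕ),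
        ((a = 0 ∧ b = 0) ∨ (a = n k₀ ∧ b = n k) ∨ (k₀ = k ∧ a = b)) →
        (L / n k₀) * (n k₀ - a) = (L / n k) * (n k - b) := by
      rintro k₀ k a b (⟨rfl, rfl⟩ | ⟨rfl, rfl⟩ | ⟨rfl, rfl⟩)
      · simp only [Nat.sub_zero]
        rw [Nat.div_mul_cancel (hdvd k₀), Nat.div_mul_cancel (hdvd k)]
      · simp
      · rfl
    have xv_eq : ∀ (k : Fin d) (i : Fin (n k + 1)),
        xv (p k i) = (((L / n k) * (n k - (i : ℕ)) : ℕ) : ℤ) := by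
      intro k i
      have hq : p ((hchoice (p k i)).choose).1 ((hchoice (p k i)).choose).2 = p k i :=
        (hchoice (p k i)).choose_spec
      have hxv : xv (p k i) = (((L / n ((hchoice (p k i)).choose).1) *
          (n ((hchoice (p k i)).choose).1 - (((hchoice (p k i)).choose).2 : ℕ)) : ℕ) : ℤ) := rfl
      rw [hxv]
      exact congrArg _ (harith _ k _ _ (hinj _ k _ i hq))
    have xdiff : ∀ q : Σ i : Fin d, Fin (n i),
        xv (p q.1 q.2.castSucc) - xv (p q.1 q.2.succ) = ((L / n q.1 : ℕ) : ℤ) := by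
      rintro ⟨k, j⟩
      rw [xv_eq, xv_eq]
      have hj : (j : ℕ) < n k := j.isLt
      simp only [Fin.coe_castSucc, Fin.val_succ]
      rw [Nat.cast_mul, Nat.cast_sub (le_of_lt hj), Nat.cast_mul, Nat.cast_sub hj]
      push_cast
      ring
    refine ⟨xv, ?_⟩
    funext a
    rw [lapEq xv a]
    have esum : ∑ q : Σ i : Fin d, Fin (n i),
        ((if p q.1 q.2.castSucc = a then (1 : ℤ) else 0)
          - (if p q.1 q.2.succ = a then 1 else 0)) *
          (xv (p q.1 q.2.castSucc) - xv (p q.1 q.2.succ))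
        = ∑ q : Σ i : Fin d, Fin (n i),
        ((if p q.1 q.2.castSucc = a then (1 : ℤ) else 0)
          - (if p q.1 q.2.succ = a then 1 else 0)) * ((L / n q.1 : ℕ) : ℤ) :=
      Finset.sum_congr rfl fun q _ => by rw [xdiff q]
    rw [esum, split (fun q => ((L / n q.1 : ℕ) : ℤ)) a]
    by_cases hav : a = v
    · subst hav
      rw [sumCast_v, sumSucc_v, sub_zero]
      simp only [Pi.smul_apply, Pi.sub_apply, Pi.single_eq_same,
        Pi.single_eq_of_ne hvw, smul_eq_mul, hm₀def]
      push_cast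
      ring
    · by_cases haw : a = w
      · subst haw
        rw [sumCast_w, sumSucc_w, zero_sub]
        simp only [Pi.smul_apply, Pi.sub_apply, Pi.single_eq_same,
          Pi.single_eq_of_ne (Ne.symm hvw), smul_eq_mul, hm₀def]
        push_cast
        ring
      · obtain ⟨k, i, hpa⟩ := hsurj a
        subst hpa
        have h0 : 0 < (i : ℕ) := by
          rcases Nat.eq_zero_or_pos (i : ℕ) with h | h
          · exact absurd ((hPv k i).mpr h) hav
          · exact h
        have h1 : (i : ℕ) < n k := by
          have := i.isLt
          rcases Nat.lt_or_ge (i : ℕ) (n k) with h | h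
          · exact h
          · exact absurd ((hPw k i).mpr (by omega)) haw
        rw [sumCast_int _ k i h0 h1, sumSucc_int _ k i h0 h1]
        simp only [Pi.smul_apply, Pi.sub_apply, Pi.single_eq_of_ne hav,
          Pi.single_eq_of_ne haw, smul_eq_mul]
        ring
  · -- lower bound
    rintro m ⟨hm, x, hx⟩
    set D : ∀ k : Fin d, Fin (n k) → ℤ :=
      fun k j => x (p k j.castSucc) - x (p k j.succ) with hDdef
    have hx' : ∀ a : V,
        (∑ q : Σ i : Fin d, Fin (n i), if p q.1 q.2.castSucc = a then D q.1 q.2 else 0)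
          - (∑ q : Σ i : Fin d, Fin (n i), if p q.1 q.2.succ = a then D q.1 q.2 else 0)
        = (m : ℤ) * ((Pi.single v 1 - Pi.single w 1 : V → ℤ) a) := by
      intro a
      have := congrFun hx a
      rw [lapEq x a, split (fun q => D q.1 q.2) a] at this
      simpa using this
    -- interior: D is locally constant along each chain
    have hstep : ∀ (k : Fin d) (i : ℕ) (h0 : 0 < i) (h1 : i < n k),
        D k ⟨i, h1⟩ = D k ⟨i - 1, by omega⟩ := by
      intro k i h0 h1
      have hik : i < n k + 1 := by omega
      have h0' : 0 < ((⟨i, hik⟩ : Fin (n k + 1)) : ℕ) := h0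
      have h1' : ((⟨i, hik⟩ : Fin (n k + 1)) : ℕ) < n k := h1
      have ha := hx' (p k (⟨i, hik⟩ : Fin (n k + 1)))
      rw [sumCast_int (fun q => D q.1 q.2) k ⟨i, hik⟩ h0' h1',
        sumSucc_int (fun q => D q.1 q.2) k ⟨i, hik⟩ h0' h1'] at ha
      have hav : p k (⟨i, hik⟩ : Fin (n k + 1)) ≠ v := fun hc => by
        have := (hPv k ⟨i, hik⟩).mp hc; simp at this; omega
      have haw : p k (⟨i, hik⟩ : Fin (n k + 1)) ≠ w := fun hc => by
        have := (hPw k ⟨i, hik⟩).mp hc; simp at this; omega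
      rw [Pi.sub_apply, Pi.single_eq_of_ne hav, Pi.single_eq_of_ne haw] at ha
      simp only [sub_zero, mul_zero] at ha
      have e1 : (⟨((⟨i, hik⟩ : Fin (n k + 1)) : ℕ), h1'⟩ : Fin (n k)) = ⟨i, h1⟩ := rfl
      have e2 : (⟨((⟨i, hik⟩ : Fin (n k + 1)) : ℕ) - 1, by omega⟩ : Fin (n k))
          = ⟨i - 1, by omega⟩ := rfl
      rw [e1, e2] at ha
      linarith [ha]
    have hconst : ∀ (k : Fin d) (i : ℕ) (h1 : i < n k),
        D k ⟨i, h1⟩ = D k ⟨0, hn k⟩ := by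
      intro k i
      induction i with
      | zero => intro h1; rfl
      | succ j ih =>
        intro h1
        rw [hstep k (j + 1) (Nat.succ_pos j) h1]
        exact ih (by omega)
    -- telescoping: value of x along a chain
    have hval : ∀ (k : Fin d) (i : ℕ) (h : i < n k + 1),
        x (p k ⟨i, h⟩) = x v - (i : ℤ) * D k ⟨0, hn k⟩ := by
      intro k i
      induction i with
      | zero =>
        intro h
        rw [show (⟨0, h⟩ : Fin (n k + 1)) = 0 from rfl, hp0]
        simp
      | succ j ih =>
        intro h
        have hj : j < n k := by omega
        have hD : D k ⟨j, hj⟩ = x (p k ⟨j, by omega⟩) - x (p k ⟨j + 1, h⟩) := rfl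
        rw [hconst k j hj] at hD
        have := ih (by omega)
        push_cast
        linarith [hD, this]
    have htel : ∀ k : Fin d, x v - x w = (n k : ℤ) * D k ⟨0, hn k⟩ := by
      intro k
      have := hval k (n k) (by omega)
      rw [show (⟨n k, by omega⟩ : Fin (n k + 1)) = Fin.last (n k) from rfl, hpl] at this
      linarith [this]
    -- at v: sum of the constants is m
    have hsum : ∑ k : Fin d, D k ⟨0, hn k⟩ = (m : ℤ) := by
      have := hx' v
      rw [sumCast_v (fun q => D q.1 q.2), sumSucc_v (fun q => D q.1 q.2), sub_zero] at this
      rw [this, Pi.sub_apply, Pi.single_eq_same, Pi.single_eq_of_ne hvw]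
      ring
    -- divisibility
    set t : ℤ := x v - x w with htdef
    have hdvdt : ∀ k : Fin d, (n k : ℤ) ∣ t := fun k => ⟨D k ⟨0, hn k⟩, htel k⟩
    have hLdvdt : (L : ℤ) ∣ t := by
      rw [Int.natCast_dvd]
      exact Finset.lcm_dvd fun k _ => Int.natCast_dvd.mp (hdvdt k)
    obtain ⟨s, hs⟩ := hLdvdt
    have hck : ∀ k : Fin d, D k ⟨0, hn k⟩ = ((L / n k : ℕ) : ℤ) * s := by
      intro k
      have h1 : (n k : ℤ) * D k ⟨0, hn k⟩ = (n k : ℤ) * (((L / n k : ℕ) : ℤ) * s) := by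
        rw [← htel k, hs]
        rw [← mul_assoc, ← Nat.cast_mul, Nat.mul_div_cancel' (hdvd k)]
      exact mul_left_cancel₀ (by exact_mod_cast (by have := hn k; omega : (n k : ℕ) ≠ 0)) h1
    have hms : (m : ℤ) = (m₀ : ℤ) * s := by
      rw [← hsum, Finset.sum_congr rfl fun k _ => hck k, ← Finset.sum_mul, hm₀def]
      push_cast
      ring
    have hs1 : 1 ≤ s := by
      by_contra hs1
      push_neg at hs1
      have : (m : ℤ) ≤ 0 := by
        rw [hms]
        have : (0 : ℤ) ≤ (m₀ : ℤ) := by positivity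
        nlinarith
      omega
    have : (m₀ : ℤ) ≤ (m : ℤ) := by
      rw [hms]
      nlinarith [hm₀pos]
    exact_mod_cast this
end

section
/- Let G be a connected simple graph on n vertices with Laplacian L(G). If μ is an integer with μ ≥ n + 2 or μ ≤ −1, then the matrix L(G) − μ·Id is spread: for all i ≠ j, e_i − e_j does not lie in the ℤ-column span of L(G) − μ·Id. -/
open Finset Matrix SimpleGraph in
private lemma two_quad_aux {n : ℕ} (G : SimpleGraph (Fin n)) [DecidableRel G.Adj] (x : Fin n → ℤ) :
    2 * (x ⬝ᵥ (G.lapMatrix ℤ *ᵥ x)) =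
      ∑ i, ∑ j, if G.Adj i j then (x i - x j)^2 else 0 := by
  have hswap : ∀ (f : Fin n → ℤ),
      (∑ i, ∑ j, if G.Adj i j then f j else 0) = ∑ i, ∑ j, if G.Adj i j then f i else 0 := by
    intro f
    rw [Finset.sum_comm]
    refine Finset.sum_congr rfl fun i _ => Finset.sum_congr rfl fun j _ => ?_
    rw [if_congr (adj_comm G j i) rfl rfl]
  have hL : x ⬝ᵥ (G.lapMatrix ℤ *ᵥ x) =
      ∑ i, ∑ j, if G.Adj i j then x i * x i - x i * x j else 0 := by
    simp_rw [dotProduct, lapMatrix_mulVec_apply, degree_eq_sum_if_adj, neighborFinset_eq_filter,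
      sum_filter, mul_sub, sum_mul, Finset.mul_sum, ← Finset.sum_sub_distrib, ite_mul, mul_ite,
      one_mul, zero_mul, mul_zero, ite_sub_ite, sub_zero]
  have hz : (∑ i, ∑ j, if G.Adj i j then x j * x j + -(x i * x i) else 0) = 0 := by
    have hsplit : ∀ i j : Fin n, (if G.Adj i j then x j * x j + -(x i * x i) else 0) =
        (if G.Adj i j then x j * x j else 0) + -(if G.Adj i j then x i * x i else 0) := by
      intro i j; by_cases h : G.Adj i j <;> simp [h]
    simp_rw [hsplit, Finset.sum_add_distrib, Finset.sum_neg_distrib]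
    rw [hswap (fun k => x k * x k)]
    simp
  have expand : ∀ i j : Fin n, (if G.Adj i j then (x i - x j)^2 else 0) =
      (if G.Adj i j then 2*(x i * x i - x i * x j) else 0) +
      (if G.Adj i j then x j * x j + -(x i * x i) else 0) := by
    intro i j; by_cases h : G.Adj i j <;> simp [h]; ring
  rw [hL, Finset.mul_sum]
  simp_rw [Finset.mul_sum, mul_ite, mul_zero, expand, Finset.sum_add_distrib, hz, add_zero]

open Finset Matrix SimpleGraph in
/-- for a connected simple graph `G` on `n` vertices with Laplacian `L(G)`,
if `μ ≥ n + 2` or `μ ≤ −1` then `L(G) − μ·Id` is spread: no `e_i − e_j` (`i ≠ j`) lies in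
its integer column span. -/
theorem lapMatrix_sub_smul_spread {n : ℕ} (G : SimpleGraph (Fin n)) [DecidableRel G.Adj]
    (hconn : G.Connected) (μ : ℤ) (hμ : (n : ℤ) + 2 ≤ μ ∨ μ ≤ -1) :
    ∀ i j : Fin n, i ≠ j →
      ¬ ∃ x : Fin n → ℤ,
        (G.lapMatrix ℤ - μ • (1 : Matrix (Fin n) (Fin n) ℤ)).mulVec x =
          Pi.single i 1 - Pi.single j 1 := by
  rintro i j hij ⟨x, hx⟩
  have hmv : (G.lapMatrix ℤ - μ • (1 : Matrix (Fin n) (Fin n) ℤ)) *ᵥ x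
      = G.lapMatrix ℤ *ᵥ x - μ • x := by
    rw [sub_mulVec, smul_mulVec, one_mulVec]
  rw [hmv] at hx
  have hs0 : (0:ℤ) ≤ ∑ k, x k ^ 2 := Finset.sum_nonneg fun k _ => sq_nonneg _
  have hLsum : ∑ k, (G.lapMatrix ℤ *ᵥ x) k = 0 := by
    have h1 : ∑ k, (G.lapMatrix ℤ *ᵥ x) k = (fun _ => (1:ℤ)) ⬝ᵥ (G.lapMatrix ℤ *ᵥ x) := by
      simp [dotProduct]
    rw [h1, dotProduct_mulVec, ← mulVec_transpose, (isSymm_lapMatrix ℤ G),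
      lapMatrix_mulVec_const_eq_zero, zero_dotProduct]
  have hμ0 : μ ≠ 0 := by rcases hμ with h | h <;> omega
  have hxsum : ∑ k, x k = 0 := by
    have h := congrArg (fun v => ∑ k, v k) hx
    simp only [Pi.sub_apply, Pi.smul_apply, smul_eq_mul, Finset.sum_sub_distrib,
      ← Finset.mul_sum, hLsum, zero_sub, Pi.single_apply] at h
    simp [Finset.sum_ite_eq'] at h
    tauto
  have hdot : x ⬝ᵥ (G.lapMatrix ℤ *ᵥ x) - μ * (∑ k, x k ^ 2) = x i - x j := by
    have h := congrArg (fun v => x ⬝ᵥ v) hx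
    simp only [dotProduct_sub, dotProduct_smul, smul_eq_mul] at h
    have hxx : x ⬝ᵥ x = ∑ k, x k ^ 2 := by simp [dotProduct, sq]
    have hsing : ∀ k : Fin n, x ⬝ᵥ Pi.single k 1 = x k := by
      intro k; simp [dotProduct, Pi.single_apply]
    rw [hxx, hsing, hsing] at h
    exact h
  have hq0 : (0:ℤ) ≤ x ⬝ᵥ (G.lapMatrix ℤ *ᵥ x) := by
    have h2 := two_quad_aux G x
    have hnn : (0:ℤ) ≤ ∑ a, ∑ b, if G.Adj a b then (x a - x b)^2 else 0 :=
      Finset.sum_nonneg fun a _ => Finset.sum_nonneg fun b _ => by positivity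
    omega
  have hpairle : x i ^ 2 + x j ^ 2 ≤ ∑ k, x k ^ 2 := by
    have h := Finset.sum_le_sum_of_subset_of_nonneg (Finset.subset_univ ({i, j} : Finset (Fin n)))
      (fun k _ _ => sq_nonneg (x k))
    rwa [Finset.sum_insert (by simp [hij]), Finset.sum_singleton] at h
  have habs1 : x i - x j ≤ ∑ k, x k ^ 2 := by
    nlinarith [sq_nonneg (x i - 1), sq_nonneg (x j + 1)]
  have habs2 : x j - x i ≤ ∑ k, x k ^ 2 := by
    nlinarith [sq_nonneg (x i + 1), sq_nonneg (x j - 1)]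
  have hxne : x ≠ 0 := by
    rintro rfl
    have h := congrFun hx i
    simp [Pi.single_apply, hij] at h
  rcases hμ with hcase | hcase
  · -- large μ : use `x ⬝ᵥ L x ≤ n * ‖x‖²`
    have hqns : x ⬝ᵥ (G.lapMatrix ℤ *ᵥ x) ≤ (n:ℤ) * ∑ k, x k ^ 2 := by
      have h2 := two_quad_aux G x
      have hle : (∑ a, ∑ b, if G.Adj a b then (x a - x b)^2 else 0) ≤
          ∑ a, ∑ b : Fin n, (x a - x b)^2 := by
        refine Finset.sum_le_sum fun a _ => Finset.sum_le_sum fun b _ => ?_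
        split
        · exact le_rfl
        · positivity
      have hid : (∑ a, ∑ b : Fin n, (x a - x b)^2) = 2 * ((n:ℤ) * ∑ k, x k ^ 2) := by
        have hrow : ∀ a : Fin n, (∑ b : Fin n, (x a - x b)^2)
            = (n:ℤ) * x a ^ 2 - 2 * x a * (∑ k, x k) + ∑ k, x k ^ 2 := by
          intro a
          have he : (∑ b : Fin n, (x a - x b)^2)
              = ∑ b : Fin n, (x a ^2 - 2 * x a * x b + x b ^2) :=
            Finset.sum_congr rfl fun b _ => by ring
          rw [he, Finset.sum_add_distrib, Finset.sum_sub_distrib, Finset.sum_const,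
            card_univ, Fintype.card_fin, ← Finset.mul_sum]
          ring
        simp_rw [hrow, hxsum, mul_zero, sub_zero, Finset.sum_add_distrib, Finset.sum_const,
          card_univ, Fintype.card_fin, ← Finset.mul_sum]
        ring
      linarith
    have hseq : (∑ k, x k ^ 2) = 0 := by
      have hms := mul_le_mul_of_nonneg_right hcase hs0
      have hle0 : (∑ k, x k ^ 2) ≤ 0 := by nlinarith
      linarith
    refine hxne (funext fun k => ?_)
    have h := (Finset.sum_eq_zero_iff_of_nonneg (fun k _ => sq_nonneg (x k))).mp hseq k
      (Finset.mem_univ k)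
    exact pow_eq_zero_iff two_ne_zero |>.mp h
  · -- small μ : quadratic form is at least 1 by connectivity
    have hq1 : (1:ℤ) ≤ x ⬝ᵥ (G.lapMatrix ℤ *ᵥ x) := by
      rcases lt_or_eq_of_le hq0 with h | h
      · omega
      · exfalso
        have hzero : (∑ a, ∑ b, if G.Adj a b then (x a - x b)^2 else 0) = 0 := by
          have h2 := two_quad_aux G x
          omega
        have hadj : ∀ u v : Fin n, G.Adj u v → x u = x v := by
          intro u v huv
          have h1 := (Finset.sum_eq_zero_iff_of_nonneg
            (fun a _ => Finset.sum_nonneg fun b _ => by positivity)).mp hzero u (Finset.mem_univ u)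
          have h2 := (Finset.sum_eq_zero_iff_of_nonneg
            (fun b _ => by positivity)).mp h1 v (Finset.mem_univ v)
          rw [if_pos huv] at h2
          have h3 := pow_eq_zero_iff two_ne_zero |>.mp h2
          linarith
        have hall : ∀ u v : Fin n, x u = x v := by
          intro u v
          obtain ⟨w⟩ := hconn.preconnected u v
          induction w with
          | nil => rfl
          | cons h p ih => exact (hadj _ _ h).trans ih
        have hconst : ∑ k, x k = (n:ℤ) * x i := by
          rw [Finset.sum_congr rfl fun k _ => hall k i, Finset.sum_const, card_univ,
            Fintype.card_fin]
          ring
        have hn : 0 < n := i.pos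
        have hxi : x i = 0 := by
          rw [hxsum] at hconst
          have hne : (n:ℤ) ≠ 0 := by exact_mod_cast hn.ne'
          exact (mul_eq_zero.mp hconst.symm).resolve_left hne
        exact hxne (funext fun k => (hall k i).trans hxi)
    have hms := mul_le_mul_of_nonneg_right hcase hs0
    linarith
end

section
/- Let M ∈ M_n(ℤ) and μ ∈ ℤ. If there exist i ≠ j with e_i − e_j ∈ Im(M − μ·Id) (ℤ-column span), then |μ| ≤ ‖M‖ + √2, where ‖M‖ is the operator norm of M on ℝ^n. If in addition no column of M − μ·Id equals some e_k − e_ℓ, then |μ| ≤ ‖M‖ + 1. -/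
/-- The operator (spectral) norm of an integer matrix, viewed as a linear map on the
Euclidean space `ℝ^n`. -/
noncomputable def opNorm {n : ℕ} (M : Matrix (Fin n) (Fin n) ℤ) : ℝ :=
  ‖LinearMap.toContinuousLinearMap (Matrix.toEuclideanLin (M.map ((↑) : ℤ → ℝ)))‖

/-- if some `e_i − e_j` (`i ≠ j`) lies in the integer column span of
`M − μ·Id`, then `|μ| ≤ ‖M‖ + √2`; if moreover no column of `M − μ·Id` equals some
`e_k − e_ℓ`, then `|μ| ≤ ‖M‖ + 1`. -/
theorem collapsed_value_bound {n : ℕ} (M : Matrix (Fin n) (Fin n) ℤ) (μ : ℤ)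
    (hcol : ∃ i j : Fin n, i ≠ j ∧ ∃ v : Fin n → ℤ,
      (M - μ • (1 : Matrix (Fin n) (Fin n) ℤ)).mulVec v = Pi.single i 1 - Pi.single j 1) :
    |(μ : ℝ)| ≤ opNorm M + Real.sqrt 2 ∧
      ((∀ c k l : Fin n, k ≠ l →
          (fun r => (M - μ • (1 : Matrix (Fin n) (Fin n) ℤ)) r c) ≠
            (Pi.single k 1 - Pi.single l 1 : Fin n → ℤ)) →
        |(μ : ℝ)| ≤ opNorm M + 1) := by
  obtain ⟨i, j, hij, v, hv⟩ := hcol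
  -- integer identity
  have hA : M.mulVec v - μ • v = Pi.single i 1 - Pi.single j 1 := by
    rw [← hv, Matrix.sub_mulVec, Matrix.smul_mulVec, Matrix.one_mulVec]
  set T := LinearMap.toContinuousLinearMap
      (Matrix.toEuclideanLin (M.map ((↑) : ℤ → ℝ))) with hT
  set V : EuclideanSpace ℝ (Fin n) := WithLp.toLp 2 (fun k => (v k : ℝ)) with hV
  set W : EuclideanSpace ℝ (Fin n) :=
    WithLp.toLp 2 (fun r => ((Pi.single i 1 - Pi.single j 1 : Fin n → ℤ) r : ℝ)) with hW
  have hTV : ∀ r, T V r = ∑ k, (M r k : ℝ) * (v k : ℝ) := by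
    intro r
    simp [hT, Matrix.toEuclideanLin_apply, Matrix.mulVec, dotProduct, hV]
  have key : (μ : ℝ) • V = T V - W := by
    ext r
    have h0 := congrFun hA r
    simp only [Pi.sub_apply, Pi.smul_apply, Matrix.mulVec, dotProduct,
      smul_eq_mul] at h0
    have h1 := congrArg (fun z : ℤ => (z : ℝ)) h0
    push_cast at h1
    show (μ : ℝ) * (v r : ℝ) = T V r - W r
    rw [hTV r]
    simp only [hW, Pi.sub_apply]
    push_cast
    linarith [h1]
  have hWnorm : ‖W‖ = Real.sqrt 2 := by
    rw [EuclideanSpace.norm_eq]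
    congr 1
    have hterm : ∀ r : Fin n, ‖W r‖ ^ 2 =
        (if r = i then (1:ℝ) else 0) + (if r = j then 1 else 0) := by
      intro r
      show ‖((Pi.single i 1 - Pi.single j 1 : Fin n → ℤ) r : ℝ)‖ ^ 2 = _
      by_cases h1 : r = i <;> by_cases h2 : r = j
      · exact absurd (h1.symm.trans h2) hij
      · simp [Pi.single_apply, h1, h2, hij, Ne.symm hij]
      · simp [Pi.single_apply, h1, h2, hij, Ne.symm hij]
      · simp [Pi.single_apply, h1, h2, hij, Ne.symm hij]
    rw [Finset.sum_congr rfl fun r _ => hterm r]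
    rw [Finset.sum_add_distrib]
    simp
    norm_num
  have hv0 : v ≠ 0 := by
    intro h
    subst h
    have := congrFun hv i
    simp [Matrix.mulVec, Pi.single_apply, hij] at this
  obtain ⟨c, hc⟩ := Function.ne_iff.mp hv0
  simp only [Pi.zero_apply] at hc
  have hVr : ∀ r : Fin n, ‖V r‖ ^ 2 = ((v r : ℝ)) ^ 2 := by
    intro r; simp [hV, sq_abs]
  have hVnorm : ‖V‖ = Real.sqrt (∑ r, ((v r : ℝ)) ^ 2) := by
    rw [EuclideanSpace.norm_eq]
    congr 1
    exact Finset.sum_congr rfl fun r _ => hVr r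
  have hV1 : (1:ℝ) ≤ ‖V‖ := by
    rw [hVnorm]
    have h1 : (1:ℝ) ≤ ((v c : ℝ)) ^ 2 := by
      have : (1:ℤ) ≤ (v c) ^ 2 := by
        rcases hc.lt_or_gt with h | h <;> nlinarith
      exact_mod_cast this
    have h2 : ((v c : ℝ)) ^ 2 ≤ ∑ r, ((v r : ℝ)) ^ 2 :=
      Finset.single_le_sum (f := fun r => ((v r : ℝ)) ^ 2)
        (fun r _ => sq_nonneg _) (Finset.mem_univ c)
    calc (1:ℝ) = Real.sqrt 1 := (Real.sqrt_one).symm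
    _ ≤ _ := Real.sqrt_le_sqrt (by linarith)
  have hVpos : (0:ℝ) < ‖V‖ := lt_of_lt_of_le zero_lt_one hV1
  have hON : 0 ≤ opNorm M := norm_nonneg _
  have hmain : |(μ:ℝ)| * ‖V‖ ≤ opNorm M * ‖V‖ + Real.sqrt 2 := by
    have h1 : ‖(μ:ℝ) • V‖ = |(μ:ℝ)| * ‖V‖ := by
      rw [norm_smul, Real.norm_eq_abs]
    have h2 : ‖T V - W‖ ≤ ‖T V‖ + ‖W‖ := norm_sub_le _ _
    have h3 : ‖T V‖ ≤ opNorm M * ‖V‖ := T.le_opNorm V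
    rw [← h1, key, hWnorm] at *
    linarith
  constructor
  · have : |(μ:ℝ)| * ‖V‖ ≤ (opNorm M + Real.sqrt 2) * ‖V‖ := by
      have hs2 : (0:ℝ) ≤ Real.sqrt 2 := Real.sqrt_nonneg 2
      nlinarith [mul_nonneg hs2 (by linarith : (0:ℝ) ≤ ‖V‖ - 1)]
    exact le_of_mul_le_mul_right this hVpos
  · intro h2
    -- show ∑ (v r)^2 ≥ 2
    have hS : (2:ℤ) ≤ ∑ r, (v r) ^ 2 := by
      by_contra hlt
      push_neg at hlt
      have hc1 : (1:ℤ) ≤ (v c) ^ 2 := by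
        rcases hc.lt_or_gt with h | h <;> nlinarith
      have hSle : ∑ r, (v r) ^ 2 ≤ 1 := by omega
      have hzero : ∀ r, r ≠ c → v r = 0 := by
        intro r hr
        have hsub : (v c) ^ 2 + (v r) ^ 2 ≤ ∑ x, (v x) ^ 2 := by
          have := Finset.sum_le_sum_of_subset_of_nonneg
            (Finset.subset_univ ({c, r} : Finset (Fin n)))
            (fun x _ _ => sq_nonneg (v x))
          rwa [Finset.sum_pair (Ne.symm hr)] at this
        nlinarith [sq_nonneg (v r)]
      have hcsq : (v c) * (v c) = 1 := by
        have hle : (v c) ^ 2 ≤ 1 := by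
          have h := Finset.single_le_sum (f := fun x => (v x) ^ 2)
            (fun x _ => sq_nonneg (v x)) (Finset.mem_univ c)
          have h2 : (v c) ^ 2 ≤ ∑ x, (v x) ^ 2 := h
          omega
        have h := le_antisymm hle hc1
        rwa [sq] at h
      have hvone : v c = 1 ∨ v c = -1 := mul_self_eq_one_iff.mp hcsq
      have hvs : v = Pi.single c (v c) := by
        funext r
        rcases eq_or_ne r c with h | h
        · subst h; simp
        · rw [Pi.single_apply, if_neg h]; exact hzero r h
      set A := M - μ • (1 : Matrix (Fin n) (Fin n) ℤ) with hAdef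
      rcases hvone with h1 | h1
      · apply h2 c i j hij
        funext r
        have := congrFun hv r
        rw [hvs, h1, Matrix.mulVec_single] at this
        simpa using this
      · apply h2 c j i hij.symm
        funext r
        have := congrFun hv r
        rw [hvs, h1, Matrix.mulVec_single] at this
        simp only [Pi.smul_apply, Matrix.col_apply, op_smul_eq_mul, mul_neg_one, Pi.sub_apply] at this ⊢
        omega
    have hV2 : Real.sqrt 2 ≤ ‖V‖ := by
      rw [hVnorm]
      apply Real.sqrt_le_sqrt
      have : ((2:ℤ):ℝ) ≤ ((∑ r, (v r) ^ 2 : ℤ) : ℝ) := by exact_mod_cast hS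
      push_cast at this
      linarith
    have hfin : |(μ:ℝ)| * ‖V‖ ≤ (opNorm M + 1) * ‖V‖ := by
      have hexp : (opNorm M + 1) * ‖V‖ = opNorm M * ‖V‖ + ‖V‖ := by ring
      rw [hexp]
      linarith [hmain, hV2]
    exact le_of_mul_le_mul_right hfin hVpos
end

section
/- Let M ∈ M_n(ℤ) be a symmetric positive semidefinite matrix and μ < −1 an integer. Then M − μ·Id is spread: for all i ≠ j, there is no v ∈ ℤ^n with (M − μ·Id)v = e_i − e_j. -/
open Matrix

/-- for a symmetric positive semidefinite integer matrix `M` and an integer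
`μ < −1`, the matrix `M − μ·Id` is spread: no `e_i − e_j` (`i ≠ j`) is of the form
`(M − μ·Id)·v` with `v` an integer vector. -/
theorem psd_sub_smul_spread {n : ℕ} (M : Matrix (Fin n) (Fin n) ℤ)
    (hsymm : M.IsSymm)
    (hpsd : ∀ v : Fin n → ℝ, 0 ≤ v ⬝ᵥ (M.map ((↑) : ℤ → ℝ)).mulVec v)
    (μ : ℤ) (hμ : μ < -1) :
    ∀ i j : Fin n, i ≠ j →
      ¬ ∃ v : Fin n → ℤ,
        (M - μ • (1 : Matrix (Fin n) (Fin n) ℤ)).mulVec v = Pi.single i 1 - Pi.single j 1 := by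
  intro i j hij ⟨v, hv⟩
  -- quadratic form over ℤ is nonneg
  have hM : 0 ≤ v ⬝ᵥ M.mulVec v := by
    have := hpsd (fun k => (v k : ℝ))
    have hcast : ((v ⬝ᵥ M.mulVec v : ℤ) : ℝ)
        = (fun k => (v k : ℝ)) ⬝ᵥ (M.map ((↑) : ℤ → ℝ)).mulVec (fun k => (v k : ℝ)) := by
      simp [dotProduct, mulVec, Finset.mul_sum, Matrix.map_apply]
    exact_mod_cast hcast ▸ this
  -- compute quadratic form of M - μ•1
  have h1 : v ⬝ᵥ (M - μ • (1 : Matrix (Fin n) (Fin n) ℤ)).mulVec v = v i - v j := by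
    rw [hv]
    simp [dotProduct, Pi.single_apply, mul_sub, Finset.sum_sub_distrib]
  have h2 : v ⬝ᵥ (M - μ • (1 : Matrix (Fin n) (Fin n) ℤ)).mulVec v
      = v ⬝ᵥ M.mulVec v - μ * (v ⬝ᵥ v) := by
    rw [sub_mulVec, dotProduct_sub, smul_mulVec, one_mulVec, dotProduct_smul]
    ring_nf
  -- v i - v j ≤ ‖v‖²
  have hsq : ∀ k, v k - v j ≤ v k * v k + v j * v j := by
    intro k; nlinarith [sq_nonneg (v k - 1), sq_nonneg (v j + 1)]
  have hle : v i - v j ≤ v ⬝ᵥ v := by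
    have hsub : ({i, j} : Finset (Fin n)) ⊆ Finset.univ := Finset.subset_univ _
    have hsum : ∑ k ∈ ({i, j} : Finset (Fin n)), v k * v k ≤ ∑ k, v k * v k :=
      Finset.sum_le_sum_of_subset_of_nonneg hsub (fun k _ _ => mul_self_nonneg _)
    have : ∑ k ∈ ({i, j} : Finset (Fin n)), v k * v k = v i * v i + v j * v j := by
      rw [Finset.sum_pair hij]
    rw [this] at hsum
    calc v i - v j ≤ v i * v i + v j * v j := hsq i
    _ ≤ ∑ k, v k * v k := hsum
    _ = v ⬝ᵥ v := rfl
  have hvv : 0 ≤ v ⬝ᵥ v := Finset.sum_nonneg fun k _ => mul_self_nonneg _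
  have hzero : v ⬝ᵥ v = 0 := by nlinarith [h1, h2, hle, hM, hvv]
  have hv0 : v = 0 := by
    funext k
    have := (Finset.sum_eq_zero_iff_of_nonneg (fun k _ => mul_self_nonneg (v k))).mp hzero
      k (Finset.mem_univ k)
    exact mul_self_eq_zero.mp this
  rw [hv0, mulVec_zero] at hv
  have := congrFun hv i
  simp [Pi.single_apply, hij] at this
end

section
/- Let M ∈ M_n(ℤ) be symmetric positive definite (v^T M v > 0 for all nonzero real v). Then for every integer μ < 0, the matrix M − μ·Id is spread, i.e., no e_i − e_j (i ≠ j) lies in (M − μId)·ℤ^n. -/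
open Matrix

/-- for a symmetric positive definite integer matrix `M` and every integer
`μ < 0`, the matrix `M − μ·Id` is spread: no `e_i − e_j` (`i ≠ j`) lies in `(M − μId)·ℤ^n`. -/
theorem posdef_sub_smul_spread {n : ℕ} (M : Matrix (Fin n) (Fin n) ℤ)
    (hsymm : M.IsSymm)
    (hpd : ∀ v : Fin n → ℝ, v ≠ 0 → 0 < v ⬝ᵥ (M.map ((↑) : ℤ → ℝ)).mulVec v)
    (μ : ℤ) (hμ : μ < 0) :
    ∀ i j : Fin n, i ≠ j →
      ¬ ∃ v : Fin n → ℤ,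
        (M - μ • (1 : Matrix (Fin n) (Fin n) ℤ)).mulVec v = Pi.single i 1 - Pi.single j 1 := by
  intro i j hij ⟨v, hv⟩
  -- v ≠ 0
  have hvne : v ≠ 0 := by
    rintro rfl
    have h0 := congrFun hv i
    rw [Matrix.mulVec_zero] at h0
    simp only [Pi.sub_apply, Pi.single_eq_same, Pi.zero_apply] at h0
    rw [Pi.single_eq_of_ne hij] at h0
    omega
  -- positivity of the quadratic form over ℤ
  have hcast : ((v ⬝ᵥ M.mulVec v : ℤ) : ℝ)
      = (fun k => (v k : ℝ)) ⬝ᵥ (M.map ((↑) : ℤ → ℝ)).mulVec (fun k => (v k : ℝ)) := by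
    simp [dotProduct, Matrix.mulVec, Matrix.map_apply, Finset.mul_sum]
  have hvne' : (fun k => (v k : ℝ)) ≠ 0 := by
    intro h
    apply hvne
    funext k
    have hk : ((v k : ℝ)) = 0 := congrFun h k
    exact_mod_cast hk
  have hpos : 0 < v ⬝ᵥ M.mulVec v := by
    have := hpd _ hvne'
    rw [← hcast] at this
    exact_mod_cast this
  have ha : 1 ≤ v ⬝ᵥ M.mulVec v := hpos
  -- the key scalar identity
  have hdot : v ⬝ᵥ (M - μ • (1 : Matrix (Fin n) (Fin n) ℤ)).mulVec v = v i - v j := by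
    rw [hv]
    simp [dotProduct_sub, dotProduct_single]
  have hdot2 : v ⬝ᵥ (M - μ • (1 : Matrix (Fin n) (Fin n) ℤ)).mulVec v
      = v ⬝ᵥ M.mulVec v - μ * (v ⬝ᵥ v) := by
    rw [Matrix.sub_mulVec, dotProduct_sub, Matrix.smul_mulVec,
      Matrix.one_mulVec, dotProduct_smul, smul_eq_mul]
  -- v ⬝ᵥ v ≥ v i ^ 2 + v j ^ 2
  have hsum : v i * v i + v j * v j ≤ v ⬝ᵥ v := by
    have hsub : ({i, j} : Finset (Fin n)) ⊆ Finset.univ := Finset.subset_univ _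
    have := Finset.sum_le_sum_of_subset_of_nonneg hsub
      (fun k _ _ => mul_self_nonneg (v k))
    rwa [Finset.sum_pair hij] at this
  have key : v i - v j = v ⬝ᵥ M.mulVec v - μ * (v ⬝ᵥ v) := by rw [← hdot2, hdot]
  have hμ1 : 1 ≤ -μ := by omega
  have hx : ∀ x : ℤ, x ≤ x * x := by
    intro x
    rcases le_or_gt x 0 with h | h
    · nlinarith
    · nlinarith
  have h1 : v i ≤ v i * v i := hx (v i)
  have h2 : -v j ≤ v j * v j := by have := hx (-v j); nlinarith
  have hS0 : 0 ≤ v ⬝ᵥ v := le_trans (by nlinarith [mul_self_nonneg (v i), mul_self_nonneg (v j)]) hsum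
  have hμS : (v ⬝ᵥ v) ≤ (-μ) * (v ⬝ᵥ v) := by nlinarith
  linarith
end
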